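/- arXiv:2412.09290 — 8 statements merged into one kernel-verified Lean document; each statement's English description precedes it below -/
import Mathlib

section
/- Let n ≥ 2 and let f be a function that is n-1 times continuously differentiable in a neighborhood of 0. Then the limit as x_1, ..., x_n all tend to 0 of the sum over i of f(x_i)/∏_{j≠i}(x_i - x_j) (taken over distinct points x_1,...,x_n) equals f^{(n-1)}(0)/(n-1)!. -/
/-- On an open set, `iteratedDerivWithin` agrees with `iteratedDeriv`. -/
lemma auxIterOpen (j : ℕ) (f : ℝ → ℝ) {U : Set ℝ} (hU : IsOpen U) {x : ℝ} (hx : x ∈ U) :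
    iteratedDerivWithin j f U x = iteratedDeriv j f x := by
  rw [iteratedDerivWithin_eq_iteratedFDerivWithin, iteratedDeriv_eq_iteratedFDeriv,
    iteratedFDerivWithin_of_isOpen j hU hx]

lemma auxCont {m j : ℕ} (hj : j ≤ m) {f : ℝ → ℝ} {U : Set ℝ} (hU : IsOpen U)
    (hf : ContDiffOn ℝ m f U) : ContinuousOn (iteratedDeriv j f) U :=
  (hf.continuousOn_iteratedDerivWithin (by exact_mod_cast hj) hU.uniqueDiffOn).congr
    fun x hx => (auxIterOpen j f hU hx).symm

lemma auxPolyContDiff (p : Polynomial ℝ) {n : WithTop ℕ∞} :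
    ContDiff ℝ n (fun t => p.eval t) := by
  induction p using Polynomial.induction_on' with
  | add p q hp hq => simpa [Polynomial.eval_add] using hp.add hq
  | monomial k a =>
      simpa [Polynomial.eval_monomial] using (contDiff_const (c := a)).mul (contDiff_id.pow k)


lemma auxRolleIter {U : Set ℝ} (hU : IsOpen U) (hconv : Convex ℝ U) :
    ∀ (k : ℕ) (g : ℝ → ℝ), (∀ j ≤ k, ContinuousOn (iteratedDeriv j g) U) →
    ∀ x : Fin (k + 1) → ℝ, StrictMono x → (∀ i, x i ∈ U) → (∀ i, g (x i) = 0) →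
    ∃ c ∈ Set.Icc (x 0) (x (Fin.last k)), iteratedDeriv k g c = 0 := by
  intro k
  induction k with
  | zero =>
    intro g _ x _ _ hz
    exact ⟨x 0, ⟨le_refl _, le_refl _⟩, by simpa using hz 0⟩
  | succ k IH =>
    intro g hg x hmono hxU hz
    have hIcc : ∀ a b : ℝ, a ∈ U → b ∈ U → Set.Icc a b ⊆ U := fun a b ha hb =>
      hconv.ordConnected.out ha hb
    have key : ∀ i : Fin (k + 1), ∃ y ∈ Set.Ioo (x i.castSucc) (x i.succ), deriv g y = 0 := by
      intro i
      have hcont : ContinuousOn g (Set.Icc (x i.castSucc) (x i.succ)) := by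
        have := (hg 0 (by omega)).mono (hIcc _ _ (hxU i.castSucc) (hxU i.succ))
        simpa using this
      exact exists_deriv_eq_zero (hmono (Fin.castSucc_lt_succ (i := i))) hcont
        (by rw [hz, hz])
    choose y hy hy0 using key
    have hymono : StrictMono y := by
      intro i j hij
      calc y i < x i.succ := (hy i).2
        _ ≤ x j.castSucc := hmono.monotone (by
            rw [Fin.le_def]
            simp only [Fin.val_succ, Fin.coe_castSucc]
            exact Fin.lt_def.mp hij)
        _ < y j := (hy j).1
    have hyU : ∀ i, y i ∈ U := fun i =>
      hIcc _ _ (hxU i.castSucc) (hxU i.succ) (Set.Ioo_subset_Icc_self (hy i))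
    have hg' : ∀ j ≤ k, ContinuousOn (iteratedDeriv j (deriv g)) U := by
      intro j hj
      have := hg (j + 1) (by omega)
      rwa [iteratedDeriv_succ'] at this
    obtain ⟨c, hcmem, hc0⟩ := IH (deriv g) hg' y hymono hyU hy0
    refine ⟨c, ?_, by rw [iteratedDeriv_succ']; exact hc0⟩
    have h1 : x 0 ≤ y 0 := by
      have := (hy 0).1
      simpa using this.le
    have h2 : y (Fin.last k) ≤ x (Fin.last (k + 1)) := by
      have := (hy (Fin.last k)).2
      rw [Fin.succ_last] at this
      exact this.le
    exact Set.Icc_subset_Icc h1 h2 hcmem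


lemma auxCoeffInterp (m : ℕ) (x : Fin (m + 1) → ℝ) (hinj : Function.Injective x)
    (r : Fin (m + 1) → ℝ) :
    (Lagrange.interpolate Finset.univ x r).coeff m
      = ∑ i, r i / ∏ j ∈ Finset.univ.erase i, (x i - x j) := by
  rw [Lagrange.interpolate_apply, Polynomial.finset_sum_coeff]
  refine Finset.sum_congr rfl fun i _ => ?_
  rw [Polynomial.coeff_C_mul]
  have hbasis : Lagrange.basis Finset.univ x i
      = Polynomial.C (∏ j ∈ Finset.univ.erase i, (x i - x j)⁻¹)
        * ∏ j ∈ Finset.univ.erase i, (Polynomial.X - Polynomial.C (x j)) := by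
    rw [Lagrange.basis, map_prod, ← Finset.prod_mul_distrib]
    rfl
  have hcard : (Finset.univ.erase i).card = m := by
    rw [Finset.card_erase_of_mem (Finset.mem_univ i)]
    simp
  have hmonic : (∏ j ∈ Finset.univ.erase i, (Polynomial.X - Polynomial.C (x j))).Monic :=
    Polynomial.monic_prod_of_monic _ _ fun j _ => Polynomial.monic_X_sub_C (x j)
  have hdeg : (∏ j ∈ Finset.univ.erase i, (Polynomial.X - Polynomial.C (x j))).natDegree = m := by
    rw [Polynomial.natDegree_prod_of_monic _ _ fun j _ => Polynomial.monic_X_sub_C (x j)]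
    simp [hcard]
  have hcoeff : (∏ j ∈ Finset.univ.erase i, (Polynomial.X - Polynomial.C (x j))).coeff m = 1 := by
    have := hmonic.coeff_natDegree
    rwa [hdeg] at this
  rw [hbasis, Polynomial.coeff_C_mul, hcoeff, mul_one, Finset.prod_inv_distrib,
    div_eq_mul_inv]

lemma auxIterDerivPoly (p : Polynomial ℝ) (k : ℕ) :
    iteratedDeriv k (fun t => p.eval t) = fun t => (Polynomial.derivative^[k] p).eval t := by
  induction k generalizing p with
  | zero => simp
  | succ k ih =>
    rw [iteratedDeriv_succ']
    have : deriv (fun t => p.eval t) = fun t => p.derivative.eval t := by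
      funext t; exact Polynomial.deriv p
    rw [this, ih, Function.iterate_succ_apply]

lemma auxPolyConstVal (p : Polynomial ℝ) (m : ℕ) (hdeg : p.natDegree ≤ m) (t : ℝ) :
    (Polynomial.derivative^[m] p).eval t = (m.factorial : ℝ) * p.coeff m := by
  have h0 : (Polynomial.derivative^[m] p).natDegree = 0 :=
    le_antisymm ((Polynomial.natDegree_iterate_derivative p m).trans (by omega)) (Nat.zero_le _)
  rw [Polynomial.eq_C_of_natDegree_le_zero h0.le, Polynomial.eval_C,
    Polynomial.coeff_iterate_derivative]
  simp [Nat.descFactorial_self, nsmul_eq_mul]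

open Set Polynomial Finset in
lemma auxDivDiffMVT (m : ℕ) (f : ℝ → ℝ) {U : Set ℝ} (hU : IsOpen U) (hconv : Convex ℝ U)
    (hf : ContDiffOn ℝ m f U) (x : Fin (m + 1) → ℝ) (hinj : Function.Injective x)
    (hxU : ∀ i, x i ∈ U) :
    ∃ c, (∃ i j, c ∈ Set.Icc (x i) (x j)) ∧
      ∑ i, f (x i) / ∏ j ∈ Finset.univ.erase i, (x i - x j)
        = iteratedDeriv m f c / (m.factorial : ℝ) := by
  set p := Lagrange.interpolate Finset.univ x (fun i => f (x i)) with hp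
  set g := fun t => f t - p.eval t with hgdef
  have hpz : ∀ i, g (x i) = 0 := by
    intro i
    have := Lagrange.eval_interpolate_at_node (fun i => f (x i)) hinj.injOn (Finset.mem_univ i)
    simp only [g]; rw [hp, this, sub_self]
  have hpC : ContDiff ℝ (m : WithTop ℕ∞) (fun t => p.eval t) := auxPolyContDiff p
  have hgC : ContDiffOn ℝ m g U := hf.sub hpC.contDiffOn
  -- sort the points
  set σ := Tuple.sort x with hσ
  set z := x ∘ σ with hz
  have hzmono : StrictMono z := (Tuple.monotone_sort x).strictMono_of_injective
    (hinj.comp σ.injective)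
  obtain ⟨c, hcmem, hc0⟩ := auxRolleIter hU hconv m g
    (fun j hj => auxCont hj hU hgC) z hzmono (fun i => hxU _) (fun i => hpz _)
  have hcU : c ∈ U := hconv.ordConnected.out (hxU _) (hxU _) hcmem
  -- difference of iterated derivatives
  have hsub : iteratedDeriv m g c
      = iteratedDeriv m f c - iteratedDeriv m (fun t => p.eval t) c := by
    have h1 := iteratedDerivWithin_sub hcU hU.uniqueDiffOn (hf c hcU) (hpC.contDiffOn c hcU)
    have e0 : iteratedDerivWithin m (f - fun t => p.eval t) U c = iteratedDeriv m g c := by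
      rw [auxIterOpen m _ hU hcU]; rfl
    rw [e0, auxIterOpen m f hU hcU, auxIterOpen m _ hU hcU] at h1
    exact h1
  have hpderiv : iteratedDeriv m (fun t => p.eval t) c
      = (m.factorial : ℝ) * p.coeff m := by
    rw [auxIterDerivPoly]
    apply auxPolyConstVal
    have hdeg : p.degree < (Finset.univ : Finset (Fin (m+1))).card :=
      Lagrange.degree_interpolate_lt _ hinj.injOn
    simp only [Finset.card_univ, Fintype.card_fin] at hdeg
    by_cases hp0 : p = 0
    · simp [hp0]
    · have := (Polynomial.natDegree_lt_iff_degree_lt hp0).mpr (by exact_mod_cast hdeg)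
      omega
  have hfin : iteratedDeriv m f c = (m.factorial : ℝ) * p.coeff m := by
    have := hsub
    rw [hc0, hpderiv] at this
    linarith
  refine ⟨c, ⟨σ 0, σ (Fin.last m), hcmem⟩, ?_⟩
  have hcoeff := auxCoeffInterp m x hinj (fun i => f (x i))
  rw [← hp] at hcoeff
  rw [← hcoeff, hfin]
  field_simp

/-- The divided difference of a `C^{n-1}` function `f` at `n` distinct points tends to
`f^{(n-1)}(0)/(n-1)!` as all points tend to `0`. -/
theorem stmt1 (n : ℕ) (hn : 2 ≤ n) (f : ℝ → ℝ) (s : Set ℝ) (hs : s ∈ nhds (0 : ℝ))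
    (hf : ContDiffOn ℝ (n - 1) f s) :
    Filter.Tendsto
      (fun x : Fin n → ℝ => ∑ i, f (x i) / ∏ j ∈ Finset.univ.erase i, (x i - x j))
      (nhdsWithin 0 {x : Fin n → ℝ | Function.Injective x})
      (nhds (iteratedDeriv (n - 1) f 0 / (Nat.factorial (n - 1) : ℝ))) := by
  obtain ⟨m, rfl⟩ : ∃ m, n = m + 1 := ⟨n - 1, by omega⟩
  simp only [Nat.add_sub_cancel] at hf ⊢
  obtain ⟨r, hr0, hrs⟩ : ∃ r > 0, Metric.ball (0 : ℝ) r ⊆ s := Metric.mem_nhds_iff.mp hs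
  set U := Metric.ball (0 : ℝ) r with hUdef
  have hU : IsOpen U := Metric.isOpen_ball
  have hconv : Convex ℝ U := convex_ball 0 r
  have hfU : ContDiffOn ℝ m f U := hf.mono hrs
  have hfact : (0 : ℝ) < (m.factorial : ℝ) := by exact_mod_cast m.factorial_pos
  rw [Metric.tendsto_nhds]
  intro ε hε
  have hcont : ContinuousAt (iteratedDeriv m f) 0 :=
    (auxCont le_rfl hU hfU).continuousAt (hU.mem_nhds (Metric.mem_ball_self hr0))
  obtain ⟨δ0, hδ0, hδ0'⟩ := Metric.continuousAt_iff.mp hcont (ε * m.factorial)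
    (by positivity)
  set δ := min δ0 r with hδdef
  have hδpos : 0 < δ := lt_min hδ0 hr0
  have h1 : ∀ᶠ x : Fin (m + 1) → ℝ in nhdsWithin 0 {x | Function.Injective x},
      dist x 0 < δ :=
    Filter.Eventually.filter_mono nhdsWithin_le_nhds
      (Metric.eventually_nhds_iff.mpr ⟨δ, hδpos, fun {y} hy => by simpa using hy⟩)
  have h2 : ∀ᶠ x : Fin (m + 1) → ℝ in nhdsWithin 0 {x | Function.Injective x},
      Function.Injective x := eventually_mem_nhdsWithin
  filter_upwards [h1, h2] with x hxδ hxinj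
  have hxi : ∀ i, |x i| < δ := by
    intro i
    have := (dist_le_pi_dist x 0 i).trans_lt hxδ
    simpa [Real.dist_eq] using this
  have hxU : ∀ i, x i ∈ U := by
    intro i
    simp only [hUdef, Metric.mem_ball, Real.dist_eq, sub_zero]
    exact (hxi i).trans_le (min_le_right _ _)
  obtain ⟨c, ⟨i0, j0, hcIcc⟩, heq⟩ := auxDivDiffMVT m f hU hconv hfU x hxinj hxU
  have hcδ : |c| < δ := by
    rw [abs_lt]
    constructor
    · have := (abs_lt.mp (hxi i0)).1
      linarith [hcIcc.1]
    · have := (abs_lt.mp (hxi j0)).2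
      linarith [hcIcc.2]
  have hckey : dist (iteratedDeriv m f c) (iteratedDeriv m f 0) < ε * m.factorial :=
    hδ0' (by simpa [Real.dist_eq] using hcδ.trans_le (min_le_left _ _))
  rw [heq, Real.dist_eq, div_sub_div_same, abs_div, abs_of_pos hfact,
    div_lt_iff₀ hfact]
  simpa [Real.dist_eq] using hckey
end

section
/- Let N be a positive integer, f a smooth function of N variables x_1,...,x_N, and V(x) = ∏_{i<j}(x_i - x_j) the Vandermonde determinant. Then for every positive integer k, V^{-1} · Σ_{i=1}^N ∂_i^k (V · f) = Σ_{m=0}^k Σ binom(k,m) · ∂_{l_0}^{k-m} f / ((x_{l_0}-x_{l_1})...(x_{l_0}-x_{l_m})), where the inner sum is over all (m+1)-tuples (l_0,...,l_m) of pairwise distinct indices in {1,...,N}. -/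
open scoped Classical

/-- Partial derivative in direction `i` of a function of `N` real variables. -/
noncomputable def pd {N : ℕ} (i : Fin N) (g : (Fin N → ℝ) → ℝ) : (Fin N → ℝ) → ℝ :=
  fun x => fderiv ℝ g x (Pi.single i 1)

/-- Vandermonde product `∏_{i<j} (x i - x j)`. -/
noncomputable def vand (N : ℕ) (x : Fin N → ℝ) : ℝ :=
  ∏ p ∈ Finset.univ.filter (fun p : Fin N × Fin N => p.1 < p.2), (x p.1 - x p.2)

variable {N : ℕ}

lemma pd_contDiff {g : (Fin N → ℝ) → ℝ} (hg : ContDiff ℝ (⊤ : ℕ∞) g) (i : Fin N) :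
    ContDiff ℝ (⊤ : ℕ∞) (pd i g) :=
  (hg.fderiv_right (by simp)).clm_apply contDiff_const

lemma pd_iter_contDiff {g : (Fin N → ℝ) → ℝ} (hg : ContDiff ℝ (⊤ : ℕ∞) g) (i : Fin N) (m : ℕ) :
    ContDiff ℝ (⊤ : ℕ∞) ((pd i)^[m] g) := by
  induction m generalizing g with
  | zero => exact hg
  | succ m ih =>
    rw [Function.iterate_succ']
    exact pd_contDiff (ih hg) i

lemma pd_mul {g h : (Fin N → ℝ) → ℝ} (hg : Differentiable ℝ g) (hh : Differentiable ℝ h)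
    (i : Fin N) :
    pd i (fun y => g y * h y) = fun x => pd i g x * h x + g x * pd i h x := by
  funext x
  simp only [pd, fderiv_fun_mul (hg x) (hh x)]
  simp [mul_comm]
  ring

lemma pd_const_mul {g : (Fin N → ℝ) → ℝ} (hg : Differentiable ℝ g) (c : ℝ) (i : Fin N) :
    pd i (fun y => c * g y) = fun x => c * pd i g x := by
  funext x
  simp [pd, fderiv_const_mul (hg x) c]

lemma pd_sum {α : Type*} (s : Finset α) (g : α → (Fin N → ℝ) → ℝ)
    (hg : ∀ a ∈ s, Differentiable ℝ (g a)) (i : Fin N) :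
    pd i (fun y => ∑ a ∈ s, g a y) = fun x => ∑ a ∈ s, pd i (g a) x := by
  funext x
  simp [pd, fderiv_fun_sum (fun a ha => (hg a ha) x)]

lemma pascal_sum (k : ℕ) (A B : ℕ → ℝ) :
    ∑ m ∈ Finset.range (k+1), (k.choose m : ℝ) * (A (m+1) * B (k-m))
      + ∑ m ∈ Finset.range (k+1), (k.choose m : ℝ) * (A m * B (k+1-m))
    = ∑ m ∈ Finset.range (k+2), ((k+1).choose m : ℝ) * (A m * B (k+1-m)) := by
  rw [Finset.sum_range_succ' (fun m => ((k+1).choose m : ℝ) * (A m * B (k+1-m))) (k+1),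
    Finset.sum_range_succ' (fun m => (k.choose m : ℝ) * (A m * B (k+1-m))) k]
  have h1 : ∑ m ∈ Finset.range k, (k.choose (m+1) : ℝ) * (A (m+1) * B (k+1-(m+1)))
      = ∑ m ∈ Finset.range (k+1), (k.choose (m+1) : ℝ) * (A (m+1) * B (k-m)) := by
    rw [Finset.sum_range_succ]
    simp
  rw [h1, ← add_assoc, ← Finset.sum_add_distrib]
  congr 1
  · apply Finset.sum_congr rfl
    intro m hm
    have : (k+1).choose (m+1) = k.choose m + k.choose (m+1) := Nat.choose_succ_succ k m
    push_cast [this]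
    ring_nf
  · simp

lemma pd_leibniz {N : ℕ} (i : Fin N) {g h : (Fin N → ℝ) → ℝ}
    (hg : ContDiff ℝ (⊤ : ℕ∞) g) (hh : ContDiff ℝ (⊤ : ℕ∞) h) (k : ℕ) :
    (pd i)^[k] (fun y => g y * h y)
      = fun x => ∑ m ∈ Finset.range (k+1),
          (k.choose m : ℝ) * ((pd i)^[m] g x * (pd i)^[k-m] h x) := by
  induction k with
  | zero => simp
  | succ k ih =>
    rw [Function.iterate_succ', Function.comp_apply, ih]
    have hdm : ∀ m, Differentiable ℝ ((pd i)^[m] g) :=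
      fun m => (pd_iter_contDiff hg i m).differentiable (by simp)
    have hdh : ∀ m, Differentiable ℝ ((pd i)^[m] h) :=
      fun m => (pd_iter_contDiff hh i m).differentiable (by simp)
    rw [pd_sum (Finset.range (k+1)) (fun m y => (k.choose m : ℝ) * ((pd i)^[m] g y * (pd i)^[k-m] h y)) (fun m _ => Differentiable.const_mul ((hdm m).mul (hdh (k-m))) _)]
    · funext x
      have step : ∀ m, pd i (fun y => (k.choose m : ℝ) * ((pd i)^[m] g y * (pd i)^[k-m] h y)) x
          = (k.choose m : ℝ) * ((pd i)^[m+1] g x * (pd i)^[k-m] h x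
            + (pd i)^[m] g x * (pd i)^[k-m+1] h x) := by
        intro m
        rw [pd_const_mul (g := fun y => (pd i)^[m] g y * (pd i)^[k-m] h y) ((hdm m).mul (hdh (k-m)))]
        rw [pd_mul (hdm m) (hdh (k-m))]
        rw [Function.iterate_succ', Function.iterate_succ']
        simp [Function.comp]
      simp only [step]
      have : ∑ m ∈ Finset.range (k+1), (k.choose m : ℝ) *
            ((pd i)^[m+1] g x * (pd i)^[k-m] h x + (pd i)^[m] g x * (pd i)^[k-m+1] h x)
          = ∑ m ∈ Finset.range (k+1), (k.choose m : ℝ) *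
              ((pd i)^[m+1] g x * (pd i)^[k-m] h x)
            + ∑ m ∈ Finset.range (k+1), (k.choose m : ℝ) *
              ((pd i)^[m] g x * (pd i)^[k+1-m] h x) := by
        rw [← Finset.sum_add_distrib]
        apply Finset.sum_congr rfl
        intro m hm
        rw [Finset.mem_range] at hm
        have : k - m + 1 = k + 1 - m := by omega
        rw [this]; ring
      rw [this, pascal_sum k (fun m => (pd i)^[m] g x) (fun m => (pd i)^[m] h x)]

noncomputable def linF {N : ℕ} (S : Finset (Fin N × Fin N)) : (Fin N → ℝ) → ℝ :=
  fun x => ∏ p ∈ S, (x p.1 - x p.2)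

noncomputable def cc {N : ℕ} (i : Fin N) (p : Fin N × Fin N) : ℝ :=
  (if p.1 = i then 1 else 0) - (if p.2 = i then 1 else 0)

lemma linF_contDiff {N : ℕ} (S : Finset (Fin N × Fin N)) : ContDiff ℝ (⊤ : ℕ∞) (linF S) := by
  apply contDiff_prod
  intro p _
  exact ((ContinuousLinearMap.proj p.1 : (Fin N → ℝ) →L[ℝ] ℝ).contDiff).sub
    ((ContinuousLinearMap.proj p.2 : (Fin N → ℝ) →L[ℝ] ℝ).contDiff)

lemma pd_linF {N : ℕ} (i : Fin N) (S : Finset (Fin N × Fin N)) :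
    pd i (linF S) = fun x => ∑ p ∈ S, cc i p * linF (S.erase p) x := by
  funext x
  have hp : ∀ p ∈ S, HasFDerivAt (fun y : Fin N → ℝ => y p.1 - y p.2)
      ((ContinuousLinearMap.proj p.1 : (Fin N → ℝ) →L[ℝ] ℝ)
        - ContinuousLinearMap.proj p.2) x := by
    intro p _
    exact ((ContinuousLinearMap.proj p.1 : (Fin N → ℝ) →L[ℝ] ℝ).hasFDerivAt).sub
      ((ContinuousLinearMap.proj p.2 : (Fin N → ℝ) →L[ℝ] ℝ).hasFDerivAt)
  have hd := HasFDerivAt.finset_prod hp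
  have heq : (fun y : Fin N → ℝ => ∏ p ∈ S, (y p.1 - y p.2)) = linF S := rfl
  rw [heq] at hd
  rw [show pd i (linF S) x = fderiv ℝ (linF S) x (Pi.single i 1) from rfl, hd.fderiv,
    ContinuousLinearMap.sum_apply]
  apply Finset.sum_congr rfl
  intro p _
  simp only [ContinuousLinearMap.smul_apply, ContinuousLinearMap.sub_apply,
    ContinuousLinearMap.proj_apply, linF, cc, smul_eq_mul, Pi.single_apply]
  ring

noncomputable def TupSet {N : ℕ} (m : ℕ) (S : Finset (Fin N × Fin N)) :
    Finset (Fin m → Fin N × Fin N) :=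
  Finset.univ.filter (fun l => Function.Injective l ∧ ∀ j, l j ∈ S)

lemma image_cons {N : ℕ} {m : ℕ} (p : Fin N × Fin N) (l : Fin m → Fin N × Fin N) :
    Finset.image (Fin.cons p l : Fin (m+1) → Fin N × Fin N) Finset.univ
      = insert p (Finset.image l Finset.univ) := by
  ext q
  simp only [Finset.mem_image, Finset.mem_insert, Finset.mem_univ, true_and]
  constructor
  · rintro ⟨j, hj⟩
    cases j using Fin.cases with
    | zero => left; rw [← hj]; rfl
    | succ j => right; exact ⟨j, by rw [← hj]; simp⟩
  · rintro (rfl | ⟨j, hj⟩)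
    · exact ⟨0, rfl⟩
    · exact ⟨j.succ, by simp [hj]⟩

lemma pd_iter_linF {N : ℕ} (i : Fin N) (m : ℕ) (S : Finset (Fin N × Fin N)) :
    (pd i)^[m] (linF S) = fun x => ∑ l ∈ TupSet m S,
      (∏ j, cc i (l j)) * linF (S \ Finset.image l Finset.univ) x := by
  induction m with
  | zero =>
    funext x
    have h0 : TupSet (N := N) 0 S = {![]} := by
      ext l
      simp only [TupSet, Finset.mem_filter, Finset.mem_univ, true_and, Finset.mem_singleton]
      constructor
      · intro _; exact Subsingleton.elim _ _
      · intro _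
        exact ⟨fun a b _ => Subsingleton.elim a b, fun j => j.elim0⟩
    rw [h0]
    simp [linF]
  | succ m ih =>
    rw [Function.iterate_succ', Function.comp_apply, ih]
    have hdiff : ∀ l ∈ TupSet (N := N) m S, Differentiable ℝ
        (fun y => (∏ j, cc i (l j)) * linF (S \ Finset.image l Finset.univ) y) :=
      fun l _ => ((linF_contDiff _).differentiable (by simp)).const_mul _
    rw [pd_sum (TupSet m S)
      (fun l y => (∏ j, cc i (l j)) * linF (S \ Finset.image l Finset.univ) y) hdiff]
    funext x
    have step : ∀ l ∈ TupSet (N := N) m S,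
        pd i (fun y => (∏ j, cc i (l j)) * linF (S \ Finset.image l Finset.univ) y) x
        = ∑ p ∈ S \ Finset.image l Finset.univ,
            ((∏ j, cc i (l j)) * cc i p)
              * linF ((S \ Finset.image l Finset.univ).erase p) x := by
      intro l _
      rw [pd_const_mul ((linF_contDiff _).differentiable (by simp))]
      show (∏ j, cc i (l j)) * pd i (linF (S \ Finset.image l Finset.univ)) x = _
      rw [congrFun (pd_linF i (S \ Finset.image l Finset.univ)) x, Finset.mul_sum]
      apply Finset.sum_congr rfl
      intro p _
      ring
    rw [Finset.sum_congr rfl step, Finset.sum_sigma' (TupSet m S)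
      (fun l => S \ Finset.image l Finset.univ)
      (fun l p => ((∏ j, cc i (l j)) * cc i p)
        * linF ((S \ Finset.image l Finset.univ).erase p) x)]
    refine Finset.sum_bij' (fun a _ => Fin.cons a.2 a.1)
      (fun l _ => ⟨Fin.tail l, l 0⟩) ?_ ?_ ?_ ?_ ?_
    · rintro ⟨l, p⟩ ha
      simp only [Finset.mem_sigma, TupSet, Finset.mem_filter, Finset.mem_univ, true_and,
        Finset.mem_sdiff] at ha ⊢
      obtain ⟨⟨hinj, hmem⟩, hpS, hpim⟩ := ha
      refine ⟨Fin.cons_injective_iff.mpr ⟨?_, hinj⟩, ?_⟩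
      · rintro ⟨j, hj⟩
        exact hpim (Finset.mem_image.mpr ⟨j, Finset.mem_univ j, hj⟩)
      · intro j
        cases j using Fin.cases with
        | zero => exact hpS
        | succ j => exact hmem j
    · intro l hl
      simp only [TupSet, Finset.mem_filter, Finset.mem_univ, true_and,
        Finset.mem_sigma, Finset.mem_sdiff] at hl ⊢
      obtain ⟨hinj, hmem⟩ := hl
      refine ⟨⟨hinj.comp (Fin.succ_injective m), fun j => hmem j.succ⟩, hmem 0, ?_⟩
      intro hc
      obtain ⟨j, _, hj⟩ := Finset.mem_image.mp hc
      exact (Fin.succ_ne_zero j) (hinj hj)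
    · rintro ⟨l, p⟩ _
      simp only [Fin.tail_cons, Fin.cons_zero]
    · intro l _
      exact Fin.cons_self_tail l
    · rintro ⟨l, p⟩ ha
      simp only [Finset.mem_sigma, TupSet, Finset.mem_filter, Finset.mem_univ, true_and,
        Finset.mem_sdiff] at ha
      obtain ⟨⟨hinj, hmem⟩, hpS, hpim⟩ := ha
      have h1 : ∏ j : Fin (m+1), cc i ((Fin.cons p l : Fin (m+1) → Fin N × Fin N) j)
          = cc i p * ∏ j : Fin m, cc i (l j) := by
        rw [Fin.prod_univ_succ]
        simp
      have h2 : S \ Finset.image (Fin.cons p l : Fin (m+1) → Fin N × Fin N) Finset.univ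
          = (S \ Finset.image l Finset.univ).erase p := by
        rw [image_cons]
        ext q
        simp only [Finset.mem_sdiff, Finset.mem_insert, Finset.mem_erase]
        tauto
      rw [h1, h2]
      ring

noncomputable def S0 (N : ℕ) : Finset (Fin N × Fin N) :=
  Finset.univ.filter (fun p : Fin N × Fin N => p.1 < p.2)

lemma vand_eq (N : ℕ) : vand N = linF (S0 N) := rfl

noncomputable def other {N : ℕ} (i : Fin N) (p : Fin N × Fin N) : Fin N :=
  if p.1 = i then p.2 else p.1

lemma other_spec {N : ℕ} {i : Fin N} {p : Fin N × Fin N} (hp : p ∈ S0 N)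
    (hc : p.1 = i ∨ p.2 = i) :
    other i p ≠ i ∧ (if i < other i p then (i, other i p) else (other i p, i)) = p ∧
      ∀ x : Fin N → ℝ, cc i p * (x p.1 - x p.2)⁻¹ = (x i - x (other i p))⁻¹ := by
  rw [S0, Finset.mem_filter] at hp
  have hlt := hp.2
  obtain ⟨a, b⟩ := p
  simp only at hlt hc ⊢
  rcases hc with rfl | rfl
  · have hbi : b ≠ a := (ne_of_lt hlt).symm
    refine ⟨by simp [other, hbi], by simp [other, hlt], ?_⟩
    intro x
    simp [other, cc, hbi]
  · have hai : a ≠ b := ne_of_lt hlt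
    have h2 : ¬ (b < a) := not_lt_of_gt hlt
    refine ⟨by simp [other, hai], by simp [other, hai, h2], ?_⟩
    intro x
    simp only [other, cc, if_neg hai, if_pos rfl]
    rw [show (x b - x a) = -(x a - x b) by ring, inv_neg]
    norm_num

lemma pairI_spec {N : ℕ} {i a : Fin N} (ha : a ≠ i) :
    (if i < a then ((i, a) : Fin N × Fin N) else (a, i)) ∈ S0 N ∧
      ((if i < a then ((i, a) : Fin N × Fin N) else (a, i)).1 = i ∨
        (if i < a then ((i, a) : Fin N × Fin N) else (a, i)).2 = i) ∧
      other i (if i < a then ((i, a) : Fin N × Fin N) else (a, i)) = a := by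
  by_cases h : i < a
  · simp [S0, other, h]
  · have h2 : a < i := ha.lt_or_gt.resolve_right h
    simp [S0, other, h, h2, ha]

lemma pd_iter_vand {N : ℕ} (i : Fin N) (m : ℕ) (x : Fin N → ℝ) (hx : Function.Injective x) :
    (pd i)^[m] (vand N) x = vand N x *
      ∑ l ∈ (Finset.univ : Finset (Fin m → Fin N)).filter
          (fun l => Function.Injective l ∧ ∀ j, l j ≠ i),
        ∏ j, (x i - x (l j))⁻¹ := by
  have hfac : ∀ p ∈ S0 N, x p.1 - x p.2 ≠ 0 := by
    intro p hp
    rw [S0, Finset.mem_filter] at hp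
    exact sub_ne_zero_of_ne (fun h => (ne_of_lt hp.2) (hx h))
  rw [vand_eq, pd_iter_linF]
  -- rewrite each linF (S0 N \ image l univ) x as vand * inverse product
  have hlin : ∀ l ∈ TupSet (N := N) m (S0 N),
      linF (S0 N \ Finset.image l Finset.univ) x
        = linF (S0 N) x * ∏ j, (x (l j).1 - x (l j).2)⁻¹ := by
    intro l hl
    rw [TupSet, Finset.mem_filter] at hl
    obtain ⟨-, hinj, hmem⟩ := hl
    have hsub : Finset.image l Finset.univ ⊆ S0 N := by
      intro p hp
      obtain ⟨j, -, rfl⟩ := Finset.mem_image.mp hp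
      exact hmem j
    have hprod : linF (S0 N \ Finset.image l Finset.univ) x
        * ∏ p ∈ Finset.image l Finset.univ, (x p.1 - x p.2) = linF (S0 N) x := by
      rw [linF, linF]
      exact Finset.prod_sdiff hsub
    have himg : ∏ p ∈ Finset.image l Finset.univ, (x p.1 - x p.2)
        = ∏ j, (x (l j).1 - x (l j).2) :=
      Finset.prod_image (fun a _ b _ h => hinj h)
    have hne : (∏ j, (x (l j).1 - x (l j).2)) ≠ 0 :=
      Finset.prod_ne_zero_iff.mpr (fun j _ => hfac _ (hmem j))
    rw [himg] at hprod
    rw [← hprod]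
    rw [Finset.prod_inv_distrib, mul_assoc, mul_inv_cancel₀ hne, mul_one]
  have h1 : ∀ l ∈ TupSet (N := N) m (S0 N),
      (∏ j, cc i (l j)) * linF (S0 N \ Finset.image l Finset.univ) x
        = linF (S0 N) x * ∏ j, (cc i (l j) * (x (l j).1 - x (l j).2)⁻¹) := by
    intro l hl
    rw [hlin l hl, Finset.prod_mul_distrib]
    ring
  beta_reduce
  rw [Finset.sum_congr rfl h1, ← Finset.mul_sum]
  congr 1
  -- now restrict the sum to tuples of pairs all containing i
  have hrestrict : ∑ l ∈ TupSet (N := N) m (S0 N), ∏ j, (cc i (l j) * (x (l j).1 - x (l j).2)⁻¹)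
      = ∑ l ∈ (TupSet (N := N) m (S0 N)).filter (fun l => ∀ j, (l j).1 = i ∨ (l j).2 = i),
          ∏ j, (cc i (l j) * (x (l j).1 - x (l j).2)⁻¹) := by
    symm
    apply Finset.sum_subset (Finset.filter_subset _ _)
    intro l hl hnl
    rw [Finset.mem_filter] at hnl
    push_neg at hnl
    obtain ⟨j, hj1, hj2⟩ := hnl hl
    apply Finset.prod_eq_zero (Finset.mem_univ j)
    rw [cc, if_neg hj1, if_neg hj2]
    ring
  rw [hrestrict]
  refine Finset.sum_bij' (fun l _ => fun j => other i (l j))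
    (fun l' _ => fun j => if i < l' j then ((i, l' j) : Fin N × Fin N) else (l' j, i))
    ?_ ?_ ?_ ?_ ?_
  · intro l hl
    simp only [Finset.mem_filter, Finset.mem_univ, true_and, TupSet] at hl ⊢
    obtain ⟨⟨hinj, hmem⟩, hcont⟩ := hl
    have hsp := fun j => other_spec (hmem j) (hcont j)
    refine ⟨?_, fun j => (hsp j).1⟩
    intro j1 j2 hj
    have hj' : other i (l j1) = other i (l j2) := hj
    apply hinj
    rw [← (hsp j1).2.1, ← (hsp j2).2.1, hj']
  · intro l' hl'
    simp only [Finset.mem_filter, Finset.mem_univ, true_and, TupSet] at hl' ⊢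
    obtain ⟨hinj, hne⟩ := hl'
    have hsp := fun j => pairI_spec (i := i) (hne j)
    refine ⟨⟨?_, fun j => (hsp j).1⟩, fun j => (hsp j).2.1⟩
    intro j1 j2 hj
    have hj' : (if i < l' j1 then ((i, l' j1) : Fin N × Fin N) else (l' j1, i))
        = (if i < l' j2 then ((i, l' j2) : Fin N × Fin N) else (l' j2, i)) := hj
    apply hinj
    rw [← (hsp j1).2.2, ← (hsp j2).2.2, hj']
  · intro l hl
    simp only [Finset.mem_filter, TupSet] at hl
    obtain ⟨⟨-, -, hmem⟩, hcont⟩ := hl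
    funext j
    exact (other_spec (hmem j) (hcont j)).2.1
  · intro l' hl'
    simp only [Finset.mem_filter, Finset.mem_univ, true_and, TupSet] at hl'
    funext j
    exact (pairI_spec (hl'.2 j)).2.2
  · intro l hl
    simp only [Finset.mem_filter, TupSet] at hl
    obtain ⟨⟨-, -, hmem⟩, hcont⟩ := hl
    apply Finset.prod_congr rfl
    intro j _
    exact (other_spec (hmem j) (hcont j)).2.2 x


lemma prod_erase_zero {m : ℕ} (g : Fin (m+1) → ℝ) :
    ∏ j ∈ Finset.univ.erase 0, g j = ∏ j : Fin m, g j.succ := by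
  rw [Fin.univ_succ, Finset.erase_cons, Finset.prod_map]
  rfl


/-- The operator `D_k f = V⁻¹ ∑_i ∂_i^k (V f)` expands as a sum of divided-difference
type terms over tuples of pairwise distinct indices. -/
theorem stmt2 (N : ℕ) (f : (Fin N → ℝ) → ℝ) (hf : ContDiff ℝ (⊤ : ℕ∞) f)
    (k : ℕ) (hk : 0 < k) (x : Fin N → ℝ) (hx : Function.Injective x) :
    (vand N x)⁻¹ * ∑ i, (pd i)^[k] (fun y => vand N y * f y) x
      = ∑ m ∈ Finset.range (k + 1),
          ∑ l ∈ (Finset.univ : Finset (Fin (m + 1) → Fin N)).filter Function.Injective,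
            (Nat.choose k m : ℝ) * (pd (l 0))^[k - m] f x /
              ∏ j ∈ Finset.univ.erase 0, (x (l 0) - x (l j)) := by
  have hV : vand N x ≠ 0 := by
    rw [vand_eq, linF]
    exact Finset.prod_ne_zero_iff.mpr
      (fun p hp => sub_ne_zero_of_ne
        (fun h => (ne_of_lt (Finset.mem_filter.mp hp).2) (hx h)))
  have hVc : ContDiff ℝ (⊤ : ℕ∞) (vand N) := by rw [vand_eq]; exact linF_contDiff (S0 N)
  have hstep : ∀ i : Fin N, (pd i)^[k] (fun y => vand N y * f y) x
      = ∑ m ∈ Finset.range (k+1), (k.choose m : ℝ) *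
          ((pd i)^[m] (vand N) x * (pd i)^[k-m] f x) :=
    fun i => congrFun (pd_leibniz i hVc hf k) x
  have hiv : ∀ (i : Fin N) (m : ℕ), (pd i)^[m] (vand N) x = vand N x *
      ∑ l ∈ (Finset.univ : Finset (Fin m → Fin N)).filter
          (fun l => Function.Injective l ∧ ∀ j, l j ≠ i),
        ∏ j, (x i - x (l j))⁻¹ :=
    fun i m => pd_iter_vand i m x hx
  simp only [hstep, hiv]
  rw [Finset.sum_comm, Finset.mul_sum]
  apply Finset.sum_congr rfl
  intro m hm
  have hin : (vand N x)⁻¹ * ∑ i, (k.choose m : ℝ) *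
        ((vand N x * ∑ l ∈ (Finset.univ : Finset (Fin m → Fin N)).filter
            (fun l => Function.Injective l ∧ ∀ j, l j ≠ i),
          ∏ j, (x i - x (l j))⁻¹) * (pd i)^[k-m] f x)
      = ∑ i, ∑ l ∈ (Finset.univ : Finset (Fin m → Fin N)).filter
            (fun l => Function.Injective l ∧ ∀ j, l j ≠ i),
          (k.choose m : ℝ) * (pd i)^[k-m] f x * ∏ j, (x i - x (l j))⁻¹ := by
    rw [Finset.mul_sum]
    apply Finset.sum_congr rfl
    intro i _
    rw [show (vand N x)⁻¹ * ((k.choose m : ℝ) *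
        ((vand N x * ∑ l ∈ (Finset.univ : Finset (Fin m → Fin N)).filter
            (fun l => Function.Injective l ∧ ∀ j, l j ≠ i),
          ∏ j, (x i - x (l j))⁻¹) * (pd i)^[k-m] f x))
      = (k.choose m : ℝ) * (pd i)^[k-m] f x *
          ((vand N x)⁻¹ * vand N x *
            ∑ l ∈ (Finset.univ : Finset (Fin m → Fin N)).filter
              (fun l => Function.Injective l ∧ ∀ j, l j ≠ i),
              ∏ j, (x i - x (l j))⁻¹) from by ring]
    rw [inv_mul_cancel₀ hV, one_mul, Finset.mul_sum]
  rw [hin, Finset.sum_sigma' Finset.univ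
    (fun i : Fin N => (Finset.univ : Finset (Fin m → Fin N)).filter
      (fun l => Function.Injective l ∧ ∀ j, l j ≠ i))
    (fun i l => (k.choose m : ℝ) * (pd i)^[k-m] f x * ∏ j, (x i - x (l j))⁻¹)]
  refine Finset.sum_bij' (fun a _ => Fin.cons a.1 a.2)
    (fun l _ => ⟨l 0, Fin.tail l⟩) ?_ ?_ ?_ ?_ ?_
  · rintro ⟨i, l⟩ ha
    simp only [Finset.mem_sigma, Finset.mem_filter, Finset.mem_univ, true_and] at ha ⊢
    obtain ⟨hinj, hne⟩ := ha
    apply Fin.cons_injective_iff.mpr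
    refine ⟨?_, hinj⟩
    rintro ⟨j, hj⟩
    exact hne j hj
  · intro l hl
    simp only [Finset.mem_filter, Finset.mem_univ, true_and, Finset.mem_sigma] at hl ⊢
    refine ⟨hl.comp (Fin.succ_injective m), fun j hj => (Fin.succ_ne_zero j) (hl hj)⟩
  · rintro ⟨i, l⟩ _
    simp only [Fin.cons_zero, Fin.tail_cons]
  · intro l _
    exact Fin.cons_self_tail l
  · rintro ⟨i, l⟩ _
    simp only [Fin.cons_zero]
    rw [prod_erase_zero (fun j => x i - x ((Fin.cons i l : Fin (m+1) → Fin N) j))]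
    simp only [Fin.cons_succ]
    rw [div_eq_mul_inv, ← Finset.prod_inv_distrib]
end

section
/- Fix real numbers λ_1 > λ_2 > ... > λ_N and define f(x_1,...,x_N) = det(exp(x_i λ_j))_{i,j=1}^N / (∏_{i<j}(x_i - x_j) · ∏_{i<j}(λ_i - λ_j)). Then for every positive integer k, the differential operator D_k(f) := (∏_{i<j}(x_i-x_j))^{-1} Σ_{i=1}^N ∂_i^k(∏_{i<j}(x_i-x_j) · f) satisfies D_k(f) = (Σ_{i=1}^N λ_i^k) · f, i.e., f is an eigenfunction of D_k with eigenvalue equal to the k-th power sum of the λ_i. -/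
/-- The normalized Harish-Chandra kernel
`f(x) = det(exp (x_i λ_j)) / (V(x) V(λ))`. -/
noncomputable def hcK (N : ℕ) (l : Fin N → ℝ) (x : Fin N → ℝ) : ℝ :=
  (Matrix.of fun i j : Fin N => Real.exp (x i * l j)).det / (vand N x * vand N l)

noncomputable def Lmap {N : ℕ} (c : Fin N → ℝ) : (Fin N → ℝ) →L[ℝ] ℝ :=
  ∑ j, c j • ContinuousLinearMap.proj j

lemma Lmap_apply {N : ℕ} (c y : Fin N → ℝ) : Lmap c y = ∑ j, y j * c j := by
  simp [Lmap, mul_comm]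

lemma Lmap_single {N : ℕ} (c : Fin N → ℝ) (i : Fin N) :
    Lmap c (Pi.single i 1) = c i := by
  simp [Lmap_apply, Pi.single_apply]

lemma hasFDeriv_E {N : ℕ} (c : Fin N → ℝ) (a : ℝ) (y : Fin N → ℝ) :
    HasFDerivAt (fun y : Fin N → ℝ => a * Real.exp (∑ j, y j * c j))
      ((a * Real.exp (∑ j, y j * c j)) • Lmap c) y := by
  have h1 : HasFDerivAt (fun y : Fin N → ℝ => ∑ j, y j * c j) (Lmap c) y := by
    have h := (Lmap c).hasFDerivAt (x := y)
    have he : (fun y : Fin N → ℝ => ∑ j, y j * c j) = fun y => Lmap c y := by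
      funext z; rw [Lmap_apply]
    rw [he]; exact h
  simpa [smul_smul] using (h1.exp).const_mul a

lemma pd_sumexp {N : ℕ} {ι : Type*} [Fintype ι] (c : ι → Fin N → ℝ) (a : ι → ℝ)
    (i : Fin N) :
    pd i (fun y => ∑ σ, a σ * Real.exp (∑ j, y j * c σ j))
      = fun y => ∑ σ, (a σ * c σ i) * Real.exp (∑ j, y j * c σ j) := by
  funext y
  have h : HasFDerivAt (fun y : Fin N → ℝ => ∑ σ, a σ * Real.exp (∑ j, y j * c σ j))
      (∑ σ, (a σ * Real.exp (∑ j, y j * c σ j)) • Lmap (c σ)) y :=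
    HasFDerivAt.fun_sum fun σ _ => hasFDeriv_E (c σ) (a σ) y
  rw [pd, h.fderiv]
  simp only [ContinuousLinearMap.sum_apply, ContinuousLinearMap.smul_apply, Lmap_single,
    smul_eq_mul]
  exact Finset.sum_congr rfl fun σ _ => by ring

lemma pd_iter_sumexp {N : ℕ} {ι : Type*} [Fintype ι] (c : ι → Fin N → ℝ) (a : ι → ℝ)
    (i : Fin N) (k : ℕ) :
    (pd i)^[k] (fun y => ∑ σ, a σ * Real.exp (∑ j, y j * c σ j))
      = fun y => ∑ σ, (a σ * c σ i ^ k) * Real.exp (∑ j, y j * c σ j) := by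
  induction k with
  | zero => simp
  | succ m ih =>
    rw [Function.iterate_succ_apply', ih, pd_sumexp]
    funext y
    exact Finset.sum_congr rfl fun σ _ => by ring

lemma pd_iter_eqOn {N : ℕ} {U : Set (Fin N → ℝ)} (hU : IsOpen U)
    {g h : (Fin N → ℝ) → ℝ} (hgh : Set.EqOn g h U) (i : Fin N) (k : ℕ) :
    Set.EqOn ((pd i)^[k] g) ((pd i)^[k] h) U := by
  induction k with
  | zero => exact hgh
  | succ m ih =>
    rw [Function.iterate_succ_apply', Function.iterate_succ_apply']
    intro y hy
    have : (pd i)^[m] g =ᶠ[nhds y] (pd i)^[m] h :=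
      Filter.eventuallyEq_of_mem (hU.mem_nhds hy) ih
    simp only [pd]
    rw [this.fderiv_eq]

lemma vand_ne_zero {N : ℕ} {x : Fin N → ℝ} (hx : Function.Injective x) :
    vand N x ≠ 0 := by
  rw [vand, Finset.prod_ne_zero_iff]
  intro p hp
  simp only [Finset.mem_filter] at hp
  exact sub_ne_zero.mpr (fun he => absurd (hx he) (ne_of_lt hp.2))

lemma vand_continuous (N : ℕ) : Continuous (vand N) := by
  unfold vand
  exact continuous_finset_prod _ fun p _ => ((continuous_apply p.1).sub (continuous_apply p.2))

lemma det_exp {N : ℕ} (l y : Fin N → ℝ) :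
    (Matrix.of fun i j : Fin N => Real.exp (y i * l j)).det
      = ∑ σ : Equiv.Perm (Fin N), (Equiv.Perm.sign σ : ℝ) * Real.exp (∑ j, y j * l (σ j)) := by
  rw [Matrix.det_apply']
  refine Fintype.sum_equiv (Equiv.inv (Equiv.Perm (Fin N))) _ _ fun σ => ?_
  simp only [Equiv.inv_apply]
  rw [Real.exp_sum]
  congr 1
  · simp
  · rw [← Equiv.prod_comp σ (fun i => Real.exp (y i * l (σ⁻¹ i)))]
    simp [Matrix.of_apply]


/-- The Harish-Chandra kernel is an eigenfunction of the operator
`D_k f = V⁻¹ ∑_i ∂_i^k (V f)` with eigenvalue the `k`-th power sum of the `λ_i`. -/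
theorem stmt3 (N : ℕ) (l : Fin N → ℝ) (hl : StrictAnti l)
    (k : ℕ) (hk : 0 < k) (x : Fin N → ℝ) (hx : Function.Injective x) :
    (vand N x)⁻¹ * ∑ i, (pd i)^[k] (fun y => vand N y * hcK N l y) x
      = (∑ i, l i ^ k) * hcK N l x := by
  set G : (Fin N → ℝ) → ℝ := fun y =>
    ∑ σ : Equiv.Perm (Fin N),
      ((Equiv.Perm.sign σ : ℝ) / vand N l) * Real.exp (∑ j, y j * l (σ j)) with hG
  set U : Set (Fin N → ℝ) := {y | vand N y ≠ 0} with hU_def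
  have hUopen : IsOpen U := isOpen_compl_singleton.preimage (vand_continuous N)
  have hxU : x ∈ U := vand_ne_zero hx
  have heq : Set.EqOn (fun y => vand N y * hcK N l y) G U := by
    intro y hy
    have hy' : vand N y ≠ 0 := hy
    simp only [hcK, hG, det_exp l y, Finset.sum_div, Finset.mul_sum]
    refine Finset.sum_congr rfl fun σ _ => ?_
    rw [mul_div_assoc', mul_div_mul_left _ _ hy']
    ring
  have hterm : ∀ i : Fin N, (pd i)^[k] (fun y => vand N y * hcK N l y) x
      = ∑ σ : Equiv.Perm (Fin N),
          (((Equiv.Perm.sign σ : ℝ) / vand N l) * l (σ i) ^ k)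
            * Real.exp (∑ j, x j * l (σ j)) := by
    intro i
    rw [pd_iter_eqOn hUopen heq i k hxU, hG]
    exact congrFun (pd_iter_sumexp (fun σ : Equiv.Perm (Fin N) => fun j => l (σ j))
      (fun σ => (Equiv.Perm.sign σ : ℝ) / vand N l) i k) x
  have hsum : ∑ i, (pd i)^[k] (fun y => vand N y * hcK N l y) x
      = (∑ i, l i ^ k) * ((Matrix.of fun i j : Fin N => Real.exp (x i * l j)).det / vand N l) := by
    simp only [hterm]
    rw [Finset.sum_comm, det_exp l x, Finset.sum_div, Finset.mul_sum]
    refine Finset.sum_congr rfl fun σ _ => ?_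
    have h2 : ∑ i, ((Equiv.Perm.sign σ : ℝ) / vand N l * l (σ i) ^ k)
          * Real.exp (∑ j, x j * l (σ j))
        = (∑ i, l (σ i) ^ k)
          * ((Equiv.Perm.sign σ : ℝ) / vand N l * Real.exp (∑ j, x j * l (σ j))) := by
      rw [Finset.sum_mul]
      exact Finset.sum_congr rfl fun i _ => by ring
    rw [h2, Equiv.sum_comp σ (fun i => l i ^ k)]
    ring
  rw [hsum, hcK]
  have hvx : vand N x ≠ 0 := vand_ne_zero hx
  field_simp
end

section
/- For every positive integer k and every real θ with |θ| > 1, (1/(2πi)) ∮_{|z|=1} (θ/(1-θz))·((z+1/z)^k - (θ+1/θ)^k) dz = (θ + 1/θ)^k - (1/(2π)) ∫_{-2}^2 [θ(u-2θ)/((θ(u-θ)-1)·√(4-u²))]·u^k du. -/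
open Real Set MeasureTheory intervalIntegral

private lemma auxDpos {θ : ℝ} (hθ : 1 < |θ|) (t : ℝ) :
    0 < 1 + θ ^ 2 - 2 * θ * Real.cos t := by
  have h1 : θ * Real.cos t ≤ |θ| := by
    calc θ * Real.cos t ≤ |θ * Real.cos t| := le_abs_self _
    _ = |θ| * |Real.cos t| := abs_mul _ _
    _ ≤ |θ| * 1 := by gcongr; exact Real.abs_cos_le_one t
    _ = |θ| := mul_one _
  nlinarith [sq_abs θ, sq_nonneg (|θ| - 1)]

/-- odd symmetry about π kills the integral over [0, 2π] -/
private lemma int_zero_of_antisym (f : ℝ → ℝ)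
    (h : ∀ t, f (2 * Real.pi - t) = -f t) :
    ∫ t in (0:ℝ)..(2 * Real.pi), f t = 0 := by
  have h1 : (∫ x in (0:ℝ)..(2 * Real.pi), f (2 * Real.pi - x))
      = ∫ x in (2 * Real.pi - 2 * Real.pi)..(2 * Real.pi - 0), f x :=
    intervalIntegral.integral_comp_sub_left f (2 * Real.pi)
  simp only [sub_self, sub_zero] at h1
  have h2 : (∫ x in (0:ℝ)..(2 * Real.pi), f (2 * Real.pi - x))
      = ∫ x in (0:ℝ)..(2 * Real.pi), -f x := by
    simp only [h]
  rw [h2, intervalIntegral.integral_neg] at h1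
  linarith

private lemma int_sym (f : ℝ → ℝ) (h : ∀ t, f (2 * Real.pi - t) = f t) :
    (∫ t in Real.pi..(2 * Real.pi), f t) = ∫ t in (0:ℝ)..Real.pi, f t := by
  have h1 : (∫ x in (0:ℝ)..Real.pi, f (2 * Real.pi - x))
      = ∫ x in (2 * Real.pi - Real.pi)..(2 * Real.pi - 0), f x :=
    intervalIntegral.integral_comp_sub_left f (2 * Real.pi)
  simp only [h, sub_zero] at h1
  rw [h1]
  congr 1
  ring

private lemma subst_lemma (k : ℕ) {θ : ℝ} (hθ : 1 < |θ|) :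
    (∫ u in (-2:ℝ)..2, θ * (u - 2 * θ) / ((θ * (u - θ) - 1) * Real.sqrt (4 - u ^ 2)) * u ^ k)
    = ∫ t in (0:ℝ)..Real.pi,
        θ * (2 * Real.cos t - 2 * θ) / (θ * (2 * Real.cos t - θ) - 1) * (2 * Real.cos t) ^ k := by
  have himg : (fun t : ℝ => 2 * Real.cos t) '' Ioo 0 Real.pi = Ioo (-2:ℝ) 2 := by
    ext u
    simp only [mem_image, mem_Ioo]
    constructor
    · rintro ⟨t, ⟨ht0, htπ⟩, rfl⟩
      have h0m : (0:ℝ) ∈ Icc (0:ℝ) Real.pi := ⟨le_rfl, Real.pi_pos.le⟩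
      have hπm : Real.pi ∈ Icc (0:ℝ) Real.pi := ⟨Real.pi_pos.le, le_rfl⟩
      have htm : t ∈ Icc (0:ℝ) Real.pi := ⟨ht0.le, htπ.le⟩
      have h1 : Real.cos t < Real.cos 0 := Real.strictAntiOn_cos h0m htm ht0
      have h2 : Real.cos Real.pi < Real.cos t := Real.strictAntiOn_cos htm hπm htπ
      rw [Real.cos_zero] at h1
      rw [Real.cos_pi] at h2
      constructor <;> nlinarith
    · rintro ⟨hu1, hu2⟩
      refine ⟨Real.arccos (u / 2), ⟨?_, ?_⟩, ?_⟩
      · exact Real.arccos_pos.2 (by linarith)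
      · rw [Real.arccos]
        have := Real.neg_pi_div_two_lt_arcsin (x := u / 2) |>.2 (by linarith)
        linarith
      · rw [Real.cos_arccos (by linarith) (by linarith)]
        ring
  have hder : ∀ x ∈ Ioo (0:ℝ) Real.pi,
      HasDerivWithinAt (fun t : ℝ => 2 * Real.cos t) (-2 * Real.sin x) (Ioo 0 Real.pi) x := by
    intro x _
    have h := (Real.hasDerivAt_cos x).const_mul (2:ℝ)
    have h2 : HasDerivAt (fun t : ℝ => 2 * Real.cos t) (-2 * Real.sin x) x := by
      simpa only [neg_mul, mul_neg] using h
    exact h2.hasDerivWithinAt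
  have hinj : InjOn (fun t : ℝ => 2 * Real.cos t) (Ioo 0 Real.pi) := by
    intro x hx y hy hxy
    exact Real.injOn_cos (Ioo_subset_Icc_self hx) (Ioo_subset_Icc_self hy) (by
      have : 2 * Real.cos x = 2 * Real.cos y := hxy
      linarith)
  rw [intervalIntegral.integral_of_le (by norm_num : (-2:ℝ) ≤ 2),
    intervalIntegral.integral_of_le Real.pi_pos.le,
    MeasureTheory.integral_Ioc_eq_integral_Ioo, MeasureTheory.integral_Ioc_eq_integral_Ioo,
    ← himg,
    MeasureTheory.integral_image_eq_integral_abs_deriv_smul measurableSet_Ioo hder hinj]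
  apply MeasureTheory.setIntegral_congr_fun measurableSet_Ioo
  intro t ht
  have hs : 0 < Real.sin t := Real.sin_pos_of_pos_of_lt_pi ht.1 ht.2
  have hsq : 4 - (2 * Real.cos t) ^ 2 = (2 * Real.sin t) ^ 2 := by
    nlinarith [Real.sin_sq_add_cos_sq t]
  have hsqrt : Real.sqrt (4 - (2 * Real.cos t) ^ 2) = 2 * Real.sin t := by
    rw [hsq, Real.sqrt_sq (by linarith)]
  have hD := auxDpos hθ t
  have hden : θ * (2 * Real.cos t - θ) - 1 ≠ 0 := by nlinarith
  simp only [smul_eq_mul]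
  rw [hsqrt, abs_of_neg (by linarith : -2 * Real.sin t < 0)]
  field_simp

private lemma key_pt {θ : ℝ} (hθ : 1 < |θ|) (t : ℝ) :
    (θ : ℂ) * Complex.exp (t * Complex.I) / (1 - (θ : ℂ) * Complex.exp (t * Complex.I))
    = ((θ * (Real.cos t - θ) / (1 + θ ^ 2 - 2 * θ * Real.cos t) : ℝ) : ℂ)
      + ((θ * Real.sin t / (1 + θ ^ 2 - 2 * θ * Real.cos t) : ℝ) : ℂ) * Complex.I := by
  have hD := auxDpos hθ t
  have hDne : ((1 + θ ^ 2 - 2 * θ * Real.cos t : ℝ) : ℂ) ≠ 0 := by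
    exact_mod_cast ne_of_gt hD
  have hne : (1 : ℂ) - θ * Complex.exp (t * Complex.I) ≠ 0 := by
    intro h
    have h1 : (θ : ℂ) * Complex.exp (t * Complex.I) = 1 := by linear_combination -h
    have h2 := congrArg norm h1
    simp only [norm_mul, Complex.norm_real, Real.norm_eq_abs, Complex.norm_exp_ofReal_mul_I, mul_one,
      norm_one] at h2
    linarith
  rw [div_eq_iff hne, Complex.exp_mul_I, ← Complex.ofReal_cos, ← Complex.ofReal_sin]
  set cr := Real.cos t with hcr
  set sr := Real.sin t with hsr
  have hcs : (cr : ℂ) ^ 2 + (sr : ℂ) ^ 2 = 1 := by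
    norm_cast
    rw [hcr, hsr]
    exact Real.cos_sq_add_sin_sq t
  have hDne2 : (1 : ℂ) + (θ : ℂ) ^ 2 - 2 * (θ : ℂ) * (cr : ℂ) ≠ 0 := by
    exact_mod_cast ne_of_gt hD
  push_cast
  have hinv : ((1 : ℂ) + (θ : ℂ) ^ 2 - 2 * (θ : ℂ) * (cr : ℂ))⁻¹ *
      ((1 : ℂ) + (θ : ℂ) ^ 2 - 2 * (θ : ℂ) * (cr : ℂ)) = 1 := inv_mul_cancel₀ hDne2
  linear_combination (-((θ:ℂ) * ((cr:ℂ) + (sr:ℂ) * Complex.I))) * hinv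
    + (θ:ℂ)^2 * ((1 : ℂ) + (θ : ℂ) ^ 2 - 2 * (θ : ℂ) * (cr : ℂ))⁻¹ * (sr:ℂ)^2 * Complex.I_sq
    - (θ:ℂ)^2 * ((1 : ℂ) + (θ : ℂ) ^ 2 - 2 * (θ : ℂ) * (cr : ℂ))⁻¹ * hcs

/-- For `|θ| > 1`, the contour integral
`(1/2πi) ∮_{|z|=1} (θ/(1-θz)) ((z+1/z)^k - (θ+1/θ)^k) dz` equals
`(θ+1/θ)^k - (1/2π) ∫_{-2}^2 θ(u-2θ)/((θ(u-θ)-1)√(4-u²)) u^k du`. -/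
theorem stmt10 (k : ℕ) (hk : 0 < k) (θ : ℝ) (hθ : 1 < |θ|) :
    ((1 : ℂ) / (2 * (Real.pi : ℂ) * Complex.I)) *
        (∮ z in C(0, 1),
          ((θ : ℂ) / (1 - (θ : ℂ) * z)) * ((z + z⁻¹) ^ k - ((θ : ℂ) + (θ : ℂ)⁻¹) ^ k))
      = (((θ + 1 / θ) ^ k -
          (1 / (2 * Real.pi)) *
            ∫ u in (-2 : ℝ)..2,
              (θ * (u - 2 * θ) / ((θ * (u - θ) - 1) * Real.sqrt (4 - u ^ 2))) * u ^ k
          : ℝ) : ℂ) := by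
  have hθ0 : θ ≠ 0 := by
    intro h
    rw [h] at hθ
    simp at hθ
    linarith
  have hθc : (θ : ℂ) ≠ 0 := Complex.ofReal_ne_zero.2 hθ0
  have hπ := Real.pi_pos
  -- the real integrand pieces
  set g1 : ℝ → ℝ := fun t =>
    -(θ * Real.sin t / (1 + θ ^ 2 - 2 * θ * Real.cos t) * (2 * Real.cos t) ^ k) with hg1def
  set g2 : ℝ → ℝ := fun t =>
    θ * (Real.cos t - θ) / (1 + θ ^ 2 - 2 * θ * Real.cos t) * (2 * Real.cos t) ^ k with hg2def
  have hDne : ∀ t, 1 + θ ^ 2 - 2 * θ * Real.cos t ≠ 0 := fun t => ne_of_gt (auxDpos hθ t)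
  have hDc : Continuous fun t : ℝ => 1 + θ ^ 2 - 2 * θ * Real.cos t := by fun_prop
  have hg1c : Continuous g1 :=
    (((continuous_const.mul Real.continuous_sin).div hDc hDne).mul
      ((continuous_const.mul Real.continuous_cos).pow k)).neg
  have hg2c : Continuous g2 :=
    ((continuous_const.mul (Real.continuous_cos.sub continuous_const)).div hDc hDne).mul
      ((continuous_const.mul Real.continuous_cos).pow k)
  -- nonvanishing on the circle
  have hzne : ∀ z ∈ Metric.sphere (0 : ℂ) 1, (1 : ℂ) - θ * z ≠ 0 := by
    intro z hz h
    have h1 : (θ : ℂ) * z = 1 := by linear_combination -h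
    have h2 := congrArg norm h1
    rw [norm_mul, Complex.norm_real, Real.norm_eq_abs] at h2
    rw [mem_sphere_zero_iff_norm] at hz
    rw [hz, mul_one, norm_one] at h2
    linarith
  have hz0 : ∀ z ∈ Metric.sphere (0 : ℂ) 1, z ≠ 0 := by
    intro z hz h
    rw [mem_sphere_zero_iff_norm, h] at hz
    simp at hz
  -- circle integrability
  have hi1 : CircleIntegrable (fun z => (θ : ℂ) / (1 - θ * z) * (z + z⁻¹) ^ k) 0 1 := by
    apply ContinuousOn.circleIntegrable (by norm_num)
    exact (continuousOn_const.div
        (continuousOn_const.sub (continuousOn_const.mul (continuousOn_id' _))) hzne).mul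
      (((continuousOn_id' _).add ((continuousOn_id' _).inv₀ hz0)).pow k)
  have hi2 : CircleIntegrable (fun z => (θ : ℂ) / (1 - θ * z) * ((θ : ℂ) + (θ : ℂ)⁻¹) ^ k) 0 1 := by
    apply ContinuousOn.circleIntegrable (by norm_num)
    exact (continuousOn_const.div
        (continuousOn_const.sub (continuousOn_const.mul (continuousOn_id' _))) hzne).mul
      continuousOn_const
  -- split the contour integral
  have hsplit : (∮ z in C(0, 1),
        ((θ : ℂ) / (1 - (θ : ℂ) * z)) * ((z + z⁻¹) ^ k - ((θ : ℂ) + (θ : ℂ)⁻¹) ^ k))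
      = (∮ z in C(0, 1), (θ : ℂ) / (1 - θ * z) * (z + z⁻¹) ^ k)
        - ∮ z in C(0, 1), (θ : ℂ) / (1 - θ * z) * ((θ : ℂ) + (θ : ℂ)⁻¹) ^ k := by
    rw [← circleIntegral.integral_sub hi1 hi2]
    apply circleIntegral.integral_congr (by norm_num)
    intro z _
    simp [mul_sub]
  -- residue computation
  have hres : (∮ z in C(0, 1), (θ : ℂ) / (1 - θ * z)) = -(2 * Real.pi * Complex.I) := by
    have heq : ∀ z : ℂ, (θ : ℂ) / (1 - θ * z) = (-1 : ℂ) * (z - ((θ : ℂ)⁻¹))⁻¹ := by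
      intro z
      have h4 : (z - (θ : ℂ)⁻¹) = -(θ : ℂ)⁻¹ * (1 - θ * z) := by
        field_simp
        ring
      rw [h4, mul_inv, inv_neg, inv_inv, div_eq_mul_inv]
      ring
    have hw : (θ : ℂ)⁻¹ ∈ Metric.ball (0 : ℂ) 1 := by
      rw [mem_ball_zero_iff, norm_inv]
      rw [show ‖(θ:ℂ)‖ = |θ| by rw [Complex.norm_real, Real.norm_eq_abs]]
      rw [inv_lt_one_iff₀]
      right
      exact hθ
    rw [circleIntegral.integral_congr (by norm_num : (0:ℝ) ≤ 1) (fun z _ => heq z),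
      circleIntegral.integral_const_mul, circleIntegral.integral_sub_inv_of_mem_ball hw]
    ring
  -- value of the constant part
  have h2 : (∮ z in C(0, 1), (θ : ℂ) / (1 - θ * z) * ((θ : ℂ) + (θ : ℂ)⁻¹) ^ k)
      = -(2 * Real.pi * Complex.I) * ((θ : ℂ) + (θ : ℂ)⁻¹) ^ k := by
    have hsc := circleIntegral.integral_smul_const (fun z => (θ : ℂ) / (1 - θ * z))
      (((θ : ℂ) + (θ : ℂ)⁻¹) ^ k) 0 1
    simp only [smul_eq_mul] at hsc
    rw [hsc, hres]
  -- parametrize the main part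
  have h1 : (∮ z in C(0, 1), (θ : ℂ) / (1 - θ * z) * (z + z⁻¹) ^ k)
      = ((∫ t in (0:ℝ)..2 * Real.pi, g1 t : ℝ) : ℂ)
        + ((∫ t in (0:ℝ)..2 * Real.pi, g2 t : ℝ) : ℂ) * Complex.I := by
    have hptw : ∀ t : ℝ, deriv (circleMap 0 1) t •
        ((θ : ℂ) / (1 - θ * circleMap 0 1 t) * (circleMap 0 1 t + (circleMap 0 1 t)⁻¹) ^ k)
        = ((g1 t : ℝ) : ℂ) + ((g2 t : ℝ) : ℂ) * Complex.I := by
      intro t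
      have he : circleMap 0 1 t = Complex.exp (t * Complex.I) := by
        simp [circleMap]
      have hsum : Complex.exp (t * Complex.I) + (Complex.exp (t * Complex.I))⁻¹
          = ((2 * Real.cos t : ℝ) : ℂ) := by
        rw [← Complex.exp_neg,
          show -((t : ℂ) * Complex.I) = ((-t : ℝ) : ℂ) * Complex.I by push_cast; ring,
          Complex.exp_mul_I, Complex.exp_mul_I, ← Complex.ofReal_cos, ← Complex.ofReal_sin,
          ← Complex.ofReal_cos, ← Complex.ofReal_sin, Real.cos_neg, Real.sin_neg]
        push_cast
        ring
      have hstep : Complex.exp (t * Complex.I) * Complex.I *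
            ((θ : ℂ) / (1 - (θ : ℂ) * Complex.exp (t * Complex.I)) * ((2 * Real.cos t : ℝ) : ℂ) ^ k)
          = Complex.I * ((θ : ℂ) * Complex.exp (t * Complex.I) /
              (1 - (θ : ℂ) * Complex.exp (t * Complex.I))) * ((2 * Real.cos t : ℝ) : ℂ) ^ k := by
        ring
      rw [deriv_circleMap, smul_eq_mul, he, hsum, hstep, key_pt hθ t]
      simp only [hg1def, hg2def]
      push_cast
      simp only [← Complex.ofReal_cos, ← Complex.ofReal_sin]
      linear_combination ((θ : ℂ) * (Real.sin t : ℂ) * (Real.cos t : ℂ) ^ k * 2 ^ k /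
        (1 + (θ : ℂ) ^ 2 - 2 * (θ : ℂ) * (Real.cos t : ℂ))) * Complex.I_sq
    have hcong : (∫ t in (0:ℝ)..2 * Real.pi, deriv (circleMap 0 1) t •
          ((θ : ℂ) / (1 - θ * circleMap 0 1 t) * (circleMap 0 1 t + (circleMap 0 1 t)⁻¹) ^ k))
        = ∫ t in (0:ℝ)..2 * Real.pi, (((g1 t : ℝ) : ℂ) + ((g2 t : ℝ) : ℂ) * Complex.I) :=
      intervalIntegral.integral_congr (fun t _ => hptw t)
    have ig1 : IntervalIntegrable (fun t => ((g1 t : ℝ) : ℂ)) MeasureTheory.volume 0 (2 * Real.pi) :=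
      (Complex.continuous_ofReal.comp hg1c).intervalIntegrable _ _
    have ig2 : IntervalIntegrable (fun t => ((g2 t : ℝ) : ℂ) * Complex.I)
        MeasureTheory.volume 0 (2 * Real.pi) :=
      ((Complex.continuous_ofReal.comp hg2c).mul continuous_const).intervalIntegrable _ _
    simp only [circleIntegral]
    rw [hcong, intervalIntegral.integral_add ig1 ig2,
      intervalIntegral.integral_mul_const, intervalIntegral.integral_ofReal,
      intervalIntegral.integral_ofReal]
  -- the odd part vanishes
  have hg1int : (∫ t in (0:ℝ)..2 * Real.pi, g1 t) = 0 := by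
    apply int_zero_of_antisym
    intro t
    simp only [hg1def]
    rw [Real.sin_two_pi_sub, Real.cos_two_pi_sub]
    ring
  -- the even part
  have hg2int : (∫ t in (0:ℝ)..2 * Real.pi, g2 t)
      = - ∫ t in (0:ℝ)..Real.pi,
          θ * (2 * Real.cos t - 2 * θ) / (θ * (2 * Real.cos t - θ) - 1) * (2 * Real.cos t) ^ k := by
    have hadj : (∫ t in (0:ℝ)..2 * Real.pi, g2 t)
        = (∫ t in (0:ℝ)..Real.pi, g2 t) + ∫ t in Real.pi..2 * Real.pi, g2 t :=
      (intervalIntegral.integral_add_adjacent_intervals (hg2c.intervalIntegrable _ _)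
        (hg2c.intervalIntegrable _ _)).symm
    have hsym2 : (∫ t in Real.pi..2 * Real.pi, g2 t) = ∫ t in (0:ℝ)..Real.pi, g2 t := by
      apply int_sym
      intro t
      simp only [hg2def]
      rw [Real.cos_two_pi_sub]
    have hF : (∫ t in (0:ℝ)..Real.pi,
          θ * (2 * Real.cos t - 2 * θ) / (θ * (2 * Real.cos t - θ) - 1) * (2 * Real.cos t) ^ k)
        = -2 * ∫ t in (0:ℝ)..Real.pi, g2 t := by
      rw [← intervalIntegral.integral_const_mul]
      apply intervalIntegral.integral_congr
      intro t _
      have hD := auxDpos hθ t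
      have hden : θ * (2 * Real.cos t - θ) - 1 ≠ 0 := by nlinarith
      simp only [hg2def]
      rw [show θ * (2 * Real.cos t - θ) - 1 = -(1 + θ ^ 2 - 2 * θ * Real.cos t) by ring, div_neg]
      ring
    rw [hadj, hsym2, hF]
    ring
  -- put everything together
  rw [hsplit, h1, h2, hg1int, hg2int, subst_lemma k hθ]
  have h2πI : (2 * (Real.pi : ℂ) * Complex.I) ≠ 0 := by
    simp [Real.pi_ne_zero, Complex.I_ne_zero]
  have hπC : ((Real.pi : ℝ) : ℂ) ≠ 0 := by
    exact_mod_cast Real.pi_ne_zero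
  set J : ℝ := ∫ t in (0:ℝ)..Real.pi,
    θ * (2 * Real.cos t - 2 * θ) / (θ * (2 * Real.cos t - θ) - 1) * (2 * Real.cos t) ^ k with hJ
  push_cast
  field_simp
  ring
end

section
/- For every positive integer N and every positive integer k, Σ_{n≠m, n,m=1}^{N} ∂_n^k ∂_m^k (∏_{i<j}(x_i - x_j)) = -Σ_{n=1}^{N} ∂_n^{2k} (∏_{i<j}(x_i - x_j)) = 0, where the products are Vandermonde determinants in x_1,...,x_N. -/
open Finset MvPolynomial

lemma Fin.sum_val_le_sum_of_injective {N : ℕ} {d : Fin N → ℕ} (hd : Function.Injective d) :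
    ∑ i : Fin N, (i : ℕ) ≤ ∑ i, d i := by
  have hd' : Function.Injective fun i => (d i : ℤ) := Nat.cast_injective.comp hd
  have h := sum_range_le_sum (s := univ.image fun i => (d i : ℤ)) (c := 0) (by simp)
  rw [card_image_of_injective _ hd', card_univ, Fintype.card_fin,
    sum_image fun i _ j _ hij => hd' hij] at h
  zify
  simpa [Fin.sum_univ_eq_sum_range (fun i => (i : ℤ))] using h

namespace MvPolynomial

variable {σ R : Type*} [CommRing R]

section Alternating

variable [DecidableEq σ]

def IsAlternating (P : MvPolynomial σ R) : Prop :=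
  ∀ ⦃a b : σ⦄, a ≠ b → rename (Equiv.swap a b) P = -P

lemma IsAlternating.coeff_eq_zero [NoZeroDivisors R] [CharZero R] {P : MvPolynomial σ R}
    (hP : IsAlternating P) {d : σ →₀ ℕ} {a b : σ} (hab : a ≠ b) (hd : d a = d b) :
    P.coeff d = 0 := by
  have hswap : d.mapDomain (Equiv.swap a b) = d := by
    ext c
    rw [Finsupp.mapDomain_equiv_apply, Equiv.symm_swap, Equiv.swap_apply_def]
    split_ifs <;> simp_all
  have h := coeff_rename_mapDomain _ (Equiv.swap a b).injective P d
  rwa [hswap, hP hab, coeff_neg, CharZero.neg_eq_self_iff] at h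

theorem IsAlternating.eq_zero_of_degree_lt [NoZeroDivisors R] [CharZero R] {N : ℕ}
    {P : MvPolynomial (Fin N) R} (hP : IsAlternating P)
    (hdeg : P ∈ restrictSupport R {d | d.degree < ∑ i : Fin N, (i : ℕ)}) : P = 0 := by
  ext d
  rw [coeff_zero]
  by_cases hd : Function.Injective d
  · by_contra hne
    have hlt : ∑ i, d i < ∑ i : Fin N, (i : ℕ) := by
      simpa [Finsupp.degree_eq_sum] using hdeg (mem_support_iff.mpr hne)
    exact (Fin.sum_val_le_sum_of_injective hd).not_gt hlt
  · simp only [Function.Injective, not_forall] at hd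
    obtain ⟨a, b, hab, hne⟩ := hd
    exact hP.coeff_eq_zero hne hab

end Alternating

lemma pderiv_mem_restrictSupport_degree_lt {p : MvPolynomial σ R} {D : ℕ}
    (h : p.totalDegree ≤ D) (i : σ) : pderiv i p ∈ restrictSupport R {d | d.degree < D} := by
  rw [mem_restrictSupport_iff]
  intro d hd
  rw [mem_coe, mem_support_iff, coeff_pderiv] at hd
  have hmem : d + Finsupp.single i 1 ∈ p.support := mem_support_iff.mpr (left_ne_zero_of_mul hd)
  have hle : (d + Finsupp.single i 1).degree ≤ D := (le_totalDegree hmem).trans h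
  rw [map_add, Finsupp.degree_single] at hle
  exact Nat.add_one_le_iff.mp hle

lemma pderiv_iterate_mem_restrictSupport_degree_lt {p : MvPolynomial σ R} {D : ℕ}
    (h : p.totalDegree ≤ D) (i : σ) {j : ℕ} (hj : 0 < j) :
    (pderiv i)^[j] p ∈ restrictSupport R {d | d.degree < D} := by
  induction j, hj using Nat.le_induction with
  | base => exact pderiv_mem_restrictSupport_degree_lt h i
  | succ j _ ih =>
    rw [Function.iterate_succ_apply']
    exact pderiv_mem_restrictSupport_degree_lt (Finset.sup_le fun d hd => (ih hd).le) i

lemma rename_pderiv_iterate (τ : Equiv.Perm σ) (i : σ) (j : ℕ) (p : MvPolynomial σ R) :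
    rename τ ((pderiv i)^[j] p) = (pderiv (τ i))^[j] (rename τ p) := by
  induction j generalizing p with
  | zero => rfl
  | succ j ih => rw [Function.iterate_succ_apply, Function.iterate_succ_apply, ih,
      pderiv_rename τ.injective]

variable [Fintype σ]

lemma rename_sum_pderiv_iterate (τ : Equiv.Perm σ) (j : ℕ) (p : MvPolynomial σ R) :
    rename τ (∑ i, (pderiv i)^[j] p) = ∑ i, (pderiv i)^[j] (rename τ p) := by
  simp only [map_sum, rename_pderiv_iterate]
  exact Equiv.sum_comp τ fun i => (pderiv i)^[j] (rename τ p)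

lemma IsAlternating.sum_pderiv_iterate [DecidableEq σ] {P : MvPolynomial σ R}
    (hP : IsAlternating P) (j : ℕ) : IsAlternating (∑ i, (pderiv i)^[j] P) := fun a b hab => by
  simp only [rename_sum_pderiv_iterate, hP hab, iterate_map_neg, sum_neg_distrib]

theorem IsAlternating.sum_pderiv_iterate_eq_zero [NoZeroDivisors R] [CharZero R] {N : ℕ}
    {P : MvPolynomial (Fin N) R} (hP : IsAlternating P)
    (hdeg : P.totalDegree ≤ ∑ i : Fin N, (i : ℕ)) {j : ℕ} (hj : 0 < j) :
    ∑ i, (pderiv i)^[j] P = 0 :=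
  (hP.sum_pderiv_iterate j).eq_zero_of_degree_lt <| Submodule.sum_mem _ fun i _ =>
    pderiv_iterate_mem_restrictSupport_degree_lt hdeg i hj

lemma sum_sum_erase_pderiv_iterate [DecidableEq σ] (k : ℕ) (p : MvPolynomial σ R) :
    ∑ n, ∑ m ∈ univ.erase n, (pderiv n)^[k] ((pderiv m)^[k] p)
      = ∑ n, (pderiv n)^[k] (∑ m, (pderiv m)^[k] p) - ∑ n, (pderiv n)^[2 * k] p := by
  rw [← sum_sub_distrib]
  refine sum_congr rfl fun n _ => ?_
  have h := map_sum ((pderiv (R := R) n).toLinearMap ^ k)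
    (fun m => (pderiv m)^[k] p) univ
  simp only [Module.End.coe_pow, Derivation.coeFn_coe] at h
  rw [sum_erase_eq_sub (mem_univ n), two_mul, Function.iterate_add_apply, h]

end MvPolynomial

variable (R : Type*) [CommRing R]

noncomputable def vandermondePoly (N : ℕ) : MvPolynomial (Fin N) R :=
  ∏ p ∈ univ.filter (fun p : Fin N × Fin N => p.1 < p.2), (X p.1 - X p.2)

variable {R}

lemma Matrix.det_vandermonde_comp_perm {n : ℕ} (v : Fin n → R) (τ : Equiv.Perm (Fin n)) :
    (Matrix.vandermonde (v ∘ τ)).det = Equiv.Perm.sign τ * (Matrix.vandermonde v).det :=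
  Matrix.det_permute τ (Matrix.vandermonde v)

lemma vandermondePoly_eq_det (N : ℕ) :
    vandermondePoly R N = (Matrix.vandermonde fun i => -X i).det := by
  rw [Matrix.det_vandermonde, vandermondePoly,
    prod_finset_product' _ univ Ioi (f := fun i j => (X i - X j : MvPolynomial (Fin N) R))
      (by simp)]
  simp only [neg_sub_neg]

lemma isAlternating_vandermondePoly (N : ℕ) : (vandermondePoly R N).IsAlternating := by
  intro a b hab
  have hmap : (rename (Equiv.swap a b)).mapMatrix (Matrix.vandermonde fun i => -X i)
      = Matrix.vandermonde
          ((fun i => -X i : Fin N → MvPolynomial (Fin N) R) ∘ Equiv.swap a b) := by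
    ext i j
    simp [Matrix.vandermonde_apply]
  rw [vandermondePoly_eq_det, AlgHom.map_det, hmap, Matrix.det_vandermonde_comp_perm,
    Equiv.Perm.sign_swap hab]
  simp

lemma totalDegree_vandermondePoly_le (N : ℕ) :
    (vandermondePoly R N).totalDegree ≤ ∑ i : Fin N, (i : ℕ) := by
  rw [vandermondePoly_eq_det, Matrix.det_apply]
  refine (totalDegree_finsetSum _ _).trans (Finset.sup_le fun τ _ => ?_)
  refine (totalDegree_smul_le _ _).trans <| (totalDegree_finsetProd _ _).trans <|
    sum_le_sum fun i _ => (totalDegree_pow _ _).trans ?_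
  have hX : (X (τ i) : MvPolynomial (Fin N) R).totalDegree ≤ 1 :=
    (totalDegree_monomial_le _ _).trans_eq (Finsupp.sum_single_index rfl)
  simpa only [totalDegree_neg, mul_one] using Nat.mul_le_mul_left (i : ℕ) hX

lemma MvPolynomial.differentiable_eval {N : ℕ} (P : MvPolynomial (Fin N) ℝ) :
    Differentiable ℝ fun x => eval x P := fun x =>
  ((AnalyticOnNhd.eval_mvPolynomial P) x trivial).differentiableAt

lemma MvPolynomial.fderiv_eval_single {N : ℕ} (P : MvPolynomial (Fin N) ℝ) (x : Fin N → ℝ)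
    (i : Fin N) : fderiv ℝ (fun y => eval y P) x (Pi.single i 1) = eval x (pderiv i P) := by
  induction P using MvPolynomial.induction_on with
  | C a => simp
  | add p q hp hq =>
    simp only [map_add]
    rw [fderiv_fun_add (p.differentiable_eval x) (q.differentiable_eval x)]
    simp [hp, hq]
  | mul_X p n hp =>
    simp only [map_mul, eval_X]
    rw [fderiv_fun_mul (p.differentiable_eval x) (differentiableAt_apply n x),
      (hasFDerivAt_apply n x).fderiv]
    by_cases h : n = i <;> simp [hp, h]

lemma pd_iterate_eval {N : ℕ} (P : MvPolynomial (Fin N) ℝ) (i : Fin N) (j : ℕ) :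
    (pd i)^[j] (fun y => eval y P) = fun y => eval y ((pderiv i)^[j] P) := by
  induction j generalizing P with
  | zero => rfl
  | succ j ih =>
    rw [Function.iterate_succ_apply, Function.iterate_succ_apply, ← ih]
    congr 1
    funext x
    exact P.fderiv_eval_single x i

lemma vand_eq_eval (N : ℕ) : vand N = fun x => eval x (vandermondePoly ℝ N) := by
  funext x
  simp only [vand, vandermondePoly, map_prod, map_sub, eval_X]

/-- `∑_{n≠m} ∂_n^k ∂_m^k V = -∑_n ∂_n^{2k} V = 0` for the Vandermonde `V`. -/
theorem stmt11 (N : ℕ) (k : ℕ) (hk : 0 < k) (x : Fin N → ℝ) :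
    (∑ n : Fin N, ∑ m ∈ Finset.univ.erase n, (pd n)^[k] ((pd m)^[k] (vand N)) x)
        = - ∑ n : Fin N, (pd n)^[2 * k] (vand N) x
    ∧ (∑ n : Fin N, ∑ m ∈ Finset.univ.erase n, (pd n)^[k] ((pd m)^[k] (vand N)) x) = 0 := by
  have hV {j : ℕ} (hj : 0 < j) :=
    (isAlternating_vandermondePoly (R := ℝ) N).sum_pderiv_iterate_eq_zero
      (totalDegree_vandermondePoly_le N) hj
  have hdiag : ∑ n : Fin N, (pd n)^[2 * k] (vand N) x = 0 := by
    simp only [vand_eq_eval, pd_iterate_eval, ← map_sum, hV (by omega : 0 < 2 * k), map_zero]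
  have hoff : ∑ n : Fin N, ∑ m ∈ univ.erase n, (pd n)^[k] ((pd m)^[k] (vand N)) x = 0 := by
    simp only [vand_eq_eval, pd_iterate_eval, ← map_sum, sum_sum_erase_pderiv_iterate, hV hk,
      hV (by omega : 0 < 2 * k), iterate_map_zero, sum_const_zero, sub_zero, map_zero]
  exact ⟨by rw [hoff, hdiag, neg_zero], hoff⟩
end

section
/- For every positive integer k and real γ > 0, Σ_{m=0}^{k} [k!·γ^{k-m}/(m!(m+1)!(k-m)!)] · d^m/du^m ((u+1)^k)|_{u=0} = (1/(2πi(k+1))) ∮_{|z|=1/√γ} (1/(z+1))·(γz + 1/z + γ + 1)^{k+1} dz. -/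
open Finset Complex

lemma itd_aux (k : ℕ) : ∀ m, iteratedDeriv m (fun u : ℝ => (u + 1) ^ k)
    = fun u => (k.descFactorial m : ℝ) * (u + 1) ^ (k - m) := by
  intro m
  induction m with
  | zero => simp [iteratedDeriv_zero]
  | succ m ih =>
    rw [iteratedDeriv_succ, ih]
    funext u
    have h1 : HasDerivAt (fun u : ℝ => (u + 1) ^ (k - m))
        ((k - m : ℕ) * (u + 1) ^ (k - m - 1)) u := by
      simpa using ((hasDerivAt_id u).add_const 1).fun_pow (k - m)
    rw [(h1.const_mul ((k.descFactorial m : ℝ))).deriv]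
    rw [Nat.descFactorial_succ]
    push_cast
    have : k - m - 1 = k - (m + 1) := by omega
    rw [this]; ring

lemma circleIntegral_finset_sum {ι : Type*} (s : Finset ι) (f : ι → ℂ → ℂ) (c : ℂ) (R : ℝ)
    (h : ∀ i ∈ s, CircleIntegrable (f i) c R) :
    (∮ z in C(c, R), ∑ i ∈ s, f i z) = ∑ i ∈ s, ∮ z in C(c, R), f i z := by
  simp only [circleIntegral, Finset.smul_sum]
  exact intervalIntegral.integral_finset_sum (fun i hi => ((circleIntegrable_iff R).mp (h i hi)))

lemma circleIntegrable_const_mul {f : ℂ → ℂ} {c : ℂ} {R : ℝ} (a : ℂ)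
    (h : CircleIntegrable f c R) : CircleIntegrable (fun z => a * f z) c R := by
  have h2 := h.smul a
  unfold CircleIntegrable at h2 ⊢
  exact h2

lemma circleIntegrable_finset_sum {ι : Type*} (s : Finset ι) (f : ι → ℂ → ℂ) {c : ℂ} {R : ℝ}
    (h : ∀ i ∈ s, CircleIntegrable (f i) c R) :
    CircleIntegrable (fun z => ∑ i ∈ s, f i z) c R := by
  unfold CircleIntegrable at h ⊢
  have h2 := IntervalIntegrable.sum s h
  have h3 : (fun θ : ℝ => ∑ i ∈ s, f i (circleMap c R θ))
      = ∑ i ∈ s, fun θ : ℝ => f i (circleMap c R θ) := by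
    funext θ; simp
  rw [h3]
  exact h2

lemma natid (k m : ℕ) (h : m ≤ k) :
    k.factorial * k.descFactorial m * (k + 1)
      = k.choose m * ((k + 1).choose (k - m))
          * (m.factorial * (m + 1).factorial * (k - m).factorial) := by
  apply Nat.eq_of_mul_eq_mul_right (Nat.factorial_pos (k - m))
  have h1 := Nat.factorial_mul_descFactorial h
  have h2 := Nat.choose_mul_factorial_mul_factorial h
  have h3 : (k + 1).choose (k - m) * (k - m).factorial * (m + 1).factorial
      = (k + 1).factorial := by
    have := Nat.choose_mul_factorial_mul_factorial (show k - m ≤ k + 1 by omega)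
    rwa [show (k + 1) - (k - m) = m + 1 by omega] at this
  calc k.factorial * k.descFactorial m * (k + 1) * (k - m).factorial
      = (k + 1) * k.factorial * ((k - m).factorial * k.descFactorial m) := by ring
    _ = (k + 1) * k.factorial * k.factorial := by rw [h1]
    _ = (k + 1).factorial * k.factorial := by rw [Nat.factorial_succ]
    _ = ((k + 1).choose (k - m) * (k - m).factorial * (m + 1).factorial)
          * (k.choose m * m.factorial * (k - m).factorial) := by rw [h3, h2]
    _ = k.choose m * (k + 1).choose (k - m)
          * (m.factorial * (m + 1).factorial * (k - m).factorial) * (k - m).factorial := by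
        ring

/-- The `k`-th moment of the limiting measure for the one-sided Plancherel character:
`∑_{m=0}^k k! γ^{k-m}/(m!(m+1)!(k-m)!) d^m/du^m (u+1)^k |_{u=0}`
equals `(1/(2πi(k+1))) ∮_{|z|=1/√γ} (1/(z+1)) (γz + 1/z + γ + 1)^{k+1} dz`. -/
theorem stmt13 (k : ℕ) (hk : 0 < k) (γ : ℝ) (hγ : 0 < γ) :
    ((∑ m ∈ Finset.range (k + 1),
        ((Nat.factorial k : ℝ) * γ ^ (k - m) /
            ((Nat.factorial m : ℝ) * (Nat.factorial (m + 1) : ℝ) *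
              (Nat.factorial (k - m) : ℝ))) *
          iteratedDeriv m (fun u : ℝ => (u + 1) ^ k) 0 : ℝ) : ℂ)
      = ((1 : ℂ) / (2 * (Real.pi : ℂ) * Complex.I * ((k : ℂ) + 1))) *
          ∮ z in C(0, 1 / Real.sqrt γ),
            (1 / (z + 1)) * ((γ : ℂ) * z + z⁻¹ + (γ : ℂ) + 1) ^ (k + 1) := by
  set R : ℝ := 1 / Real.sqrt γ with hRdef
  have hR : 0 < R := by positivity
  -- the expanded integrand
  set g : ℂ → ℂ := fun z => ∑ m ∈ range (k + 1), ∑ n ∈ range (k + 2),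
    ((k.choose m : ℂ) * ((k + 1).choose n : ℂ) * (γ : ℂ) ^ n)
      * (z - 0) ^ ((m : ℤ) + (n : ℤ) - ((k : ℤ) + 1)) with hgdef
  -- pointwise equality on the sphere
  have heq : Set.EqOn (fun z : ℂ => (1 / (z + 1)) * ((γ : ℂ) * z + z⁻¹ + (γ : ℂ) + 1) ^ (k + 1))
      g (Metric.sphere (0 : ℂ) R) := by
    intro z hz
    have hz0 : z ≠ 0 := by
      intro h0
      rw [Metric.mem_sphere, h0, dist_self] at hz
      exact hR.ne hz
    have hstep : (fun z : ℂ => (1 / (z + 1)) * ((γ : ℂ) * z + z⁻¹ + (γ : ℂ) + 1) ^ (k + 1)) z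
        = (z + 1) ^ k * ((γ : ℂ) * z + 1) ^ (k + 1) * z ^ (-((k : ℤ) + 1)) := by
      simp only
      have hbase : (γ : ℂ) * z + z⁻¹ + (γ : ℂ) + 1 = ((γ : ℂ) * z + 1) * (z + 1) * z⁻¹ := by
        field_simp
        ring
      rw [hbase, mul_pow, mul_pow]
      have hzp : (z⁻¹) ^ (k + 1) = z ^ (-((k : ℤ) + 1)) := by
        have hcast : (-((k : ℤ) + 1)) = -(((k + 1 : ℕ)) : ℤ) := by push_cast; ring
        rw [hcast, zpow_neg, zpow_natCast, ← inv_pow]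
      by_cases hz1 : z + 1 = 0
      · rw [hz1]
        simp [zero_pow, hk.ne', Nat.succ_ne_zero]
      · rw [hzp, pow_succ (z + 1)]
        field_simp
    rw [hstep]
    -- now expand
    have e1 : (z + 1) ^ k = ∑ m ∈ range (k + 1), (k.choose m : ℂ) * z ^ m := by
      rw [add_pow]
      exact Finset.sum_congr rfl fun m hm => by ring
    have e2 : ((γ : ℂ) * z + 1) ^ (k + 1)
        = ∑ n ∈ range (k + 2), ((k + 1).choose n : ℂ) * (γ : ℂ) ^ n * z ^ n := by
      rw [add_pow]
      exact Finset.sum_congr rfl fun n hn => by ring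
    rw [e1, e2, hgdef]
    simp only
    rw [Finset.sum_mul, Finset.sum_mul]
    refine Finset.sum_congr rfl fun m hm => ?_
    rw [Finset.mul_sum, Finset.sum_mul]
    refine Finset.sum_congr rfl fun n hn => ?_
    have hzp : (z - 0) ^ ((m : ℤ) + (n : ℤ) - ((k : ℤ) + 1))
        = z ^ m * z ^ n * z ^ (-((k : ℤ) + 1)) := by
      rw [sub_zero, ← zpow_natCast z m, ← zpow_natCast z n, ← zpow_add₀ hz0, ← zpow_add₀ hz0]
      ring_nf
    rw [hzp]
    ring
  -- compute the integral of g
  have hint : ∀ (e : ℤ), CircleIntegrable (fun z : ℂ => (z - 0) ^ e) 0 R := by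
    intro e
    rw [circleIntegrable_sub_zpow_iff]
    right; right
    intro hmem
    rw [Metric.mem_sphere, dist_self, abs_of_pos hR] at hmem
    exact hR.ne hmem
  have hzpowint : ∀ (e : ℤ), (∮ z in C(0, R), (z - 0) ^ e)
      = if e = -1 then 2 * (Real.pi : ℂ) * Complex.I else 0 := by
    intro e
    by_cases he : e = -1
    · subst he
      rw [if_pos rfl]
      simp only [zpow_neg_one]
      exact circleIntegral.integral_sub_center_inv 0 hR.ne'
    · rw [if_neg he]
      exact circleIntegral.integral_sub_zpow_of_ne he 0 0 R
  have hgint : (∮ z in C(0, R), g z)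
      = ∑ m ∈ range (k + 1), ((k.choose m : ℂ) * (((k + 1).choose (k - m) : ℕ) : ℂ)
          * (γ : ℂ) ^ (k - m)) * (2 * (Real.pi : ℂ) * Complex.I) := by
    rw [hgdef]
    rw [circleIntegral_finset_sum _ _ _ _ (fun m hm => circleIntegrable_finset_sum _ _
      (fun n hn => circleIntegrable_const_mul _ (hint _)))]
    refine Finset.sum_congr rfl fun m hm => ?_
    rw [circleIntegral_finset_sum _ _ _ _ (fun n hn => circleIntegrable_const_mul _ (hint _))]
    have hmk : m ≤ k := by
      simp only [Finset.mem_range] at hm; omega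
    rw [Finset.sum_eq_single (k - m)]
    · rw [circleIntegral.integral_const_mul, hzpowint]
      rw [if_pos (by omega : (m : ℤ) + ((k - m : ℕ) : ℤ) - ((k : ℤ) + 1) = -1)]
    · intro n hn hne
      rw [circleIntegral.integral_const_mul, hzpowint,
        if_neg (by omega : ¬ ((m : ℤ) + (n : ℤ) - ((k : ℤ) + 1) = -1)), mul_zero]
    · intro hnot
      exact absurd (Finset.mem_range.mpr (by omega)) hnot
  -- rewrite the RHS
  rw [circleIntegral.integral_congr hR.le heq, hgint]
  rw [Finset.mul_sum]
  -- rewrite the LHS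
  have hpi : (2 * (Real.pi : ℂ) * Complex.I) ≠ 0 := by
    simp [Real.pi_ne_zero, Complex.I_ne_zero]
  have hLHS : (∑ m ∈ Finset.range (k + 1),
        ((Nat.factorial k : ℝ) * γ ^ (k - m) /
            ((Nat.factorial m : ℝ) * (Nat.factorial (m + 1) : ℝ) *
              (Nat.factorial (k - m) : ℝ))) *
          iteratedDeriv m (fun u : ℝ => (u + 1) ^ k) 0 : ℝ)
      = ∑ m ∈ Finset.range (k + 1),
          ((Nat.factorial k : ℝ) * γ ^ (k - m) /
            ((Nat.factorial m : ℝ) * (Nat.factorial (m + 1) : ℝ) *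
              (Nat.factorial (k - m) : ℝ))) * (k.descFactorial m : ℝ) := by
    refine Finset.sum_congr rfl fun m hm => ?_
    rw [itd_aux k m]
    norm_num
  rw [hLHS]
  push_cast
  have hcoef : ∀ X : ℂ, (1 / (2 * (Real.pi : ℂ) * Complex.I * ((k : ℂ) + 1)))
      * (X * (2 * (Real.pi : ℂ) * Complex.I)) = X / ((k : ℂ) + 1) := by
    intro X
    have hk1 : ((k : ℂ) + 1) ≠ 0 := by
      have h' : ((k + 1 : ℕ) : ℂ) ≠ 0 := Nat.cast_ne_zero.mpr (Nat.succ_ne_zero k)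
      push_cast at h'
      exact h'
    field_simp
  refine Finset.sum_congr rfl fun m hm => ?_
  rw [hcoef]
  have hmk : m ≤ k := by simp only [Finset.mem_range] at hm; omega
  have hk1 : ((k : ℂ) + 1) ≠ 0 := by
    have h' : ((k + 1 : ℕ) : ℂ) ≠ 0 := Nat.cast_ne_zero.mpr (Nat.succ_ne_zero k)
    push_cast at h'
    exact h'
  have hfact : ∀ n : ℕ, ((n.factorial : ℂ)) ≠ 0 := fun n =>
    Nat.cast_ne_zero.mpr (Nat.factorial_ne_zero n)
  have hden : ((m.factorial : ℂ)) * (((m + 1).factorial : ℂ)) * (((k - m).factorial : ℂ)) ≠ 0 :=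
    mul_ne_zero (mul_ne_zero (hfact m) (hfact (m + 1))) (hfact (k - m))
  have hnatC := congrArg (Nat.cast : ℕ → ℂ) (natid k m hmk)
  push_cast at hnatC
  rw [div_mul_eq_mul_div, div_eq_div_iff hden hk1]
  linear_combination ((γ : ℂ) ^ (k - m)) * hnatC
end

section
/- For every positive integer k ≥ 4, (1/12)·Σ_{m=0}^{k-4} [k!/(m!(m+2)!(k-m-4)!)] · d^m/dx^m (x^{k-m-4})|_{x=0} = (k(k-1)/(24πi)) ∮_{|z|=1} z·(z+1/z)^{k-2} dz, and this equals (1/(24π)) ∫_{-2}^{2} [d²/dt²(t^k)]·(t²-2)/√(4-t²) dt. -/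
lemma iterDeriv_pow (m : ℕ) : ∀ p : ℕ, iteratedDeriv m (fun x : ℝ => x ^ p)
    = fun x => (p.descFactorial m : ℝ) * x ^ (p - m) := by
  induction m with
  | zero => intro p; simp [iteratedDeriv_zero]
  | succ m ih =>
    intro p
    rw [iteratedDeriv_succ, ih p]
    funext x
    have h1 : HasDerivAt (fun x : ℝ => (p.descFactorial m : ℝ) * x ^ (p - m))
        ((p.descFactorial m : ℝ) * ((p - m : ℕ) * x ^ (p - m - 1))) x :=
      (hasDerivAt_pow (p - m) x).const_mul _
    rw [h1.deriv, Nat.descFactorial_succ, Nat.sub_sub]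
    push_cast
    ring

lemma sum_eval (k : ℕ) (hk : 4 ≤ k) :
    (∑ m ∈ Finset.range (k - 3),
        ((Nat.factorial k : ℝ) /
            ((Nat.factorial m : ℝ) * (Nat.factorial (m + 2) : ℝ) *
              (Nat.factorial (k - m - 4) : ℝ))) *
          iteratedDeriv m (fun x : ℝ => x ^ (k - m - 4)) 0)
      = if Even k then (k.factorial : ℝ) / ((k/2 - 2).factorial * (k/2).factorial) else 0 := by
  have hterm : ∀ m : ℕ, iteratedDeriv m (fun x : ℝ => x ^ (k - m - 4)) 0
      = ((k - m - 4).descFactorial m : ℝ) * (0:ℝ) ^ (k - m - 4 - m) := by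
    intro m
    rw [iterDeriv_pow]
  have hzero : ∀ m : ℕ, k - m - 4 ≠ m →
      iteratedDeriv m (fun x : ℝ => x ^ (k - m - 4)) 0 = 0 := by
    intro m hne
    rw [hterm m]
    rcases lt_or_gt_of_ne hne with h | h
    · rw [Nat.descFactorial_eq_zero_iff_lt.mpr h]; simp
    · rw [zero_pow (by omega)]; ring
  rcases Nat.even_or_odd k with he | ho
  · rw [if_pos he]
    obtain ⟨r, hr⟩ := he
    rw [Finset.sum_eq_single (k/2 - 2)]
    · rw [hterm, show k - (k/2 - 2) - 4 = k/2 - 2 by omega, Nat.descFactorial_self,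
        Nat.sub_self, pow_zero, show k/2 - 2 + 2 = k/2 by omega]
      have h1 : ((k/2 - 2).factorial : ℝ) ≠ 0 := Nat.cast_ne_zero.mpr (Nat.factorial_ne_zero _)
      have h2 : ((k/2).factorial : ℝ) ≠ 0 := Nat.cast_ne_zero.mpr (Nat.factorial_ne_zero _)
      field_simp
    · intro j hj hne
      rw [hzero j (by have := Finset.mem_range.mp hj; omega)]
      ring
    · intro h
      exact absurd (Finset.mem_range.mpr (by omega)) h
  · rw [if_neg (Nat.not_even_iff_odd.mpr ho)]
    refine Finset.sum_eq_zero fun j hj => ?_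
    obtain ⟨r, hr⟩ := ho
    rw [hzero j (by have := Finset.mem_range.mp hj; omega)]
    ring

open Complex in
lemma contour_param (N : ℕ) :
    (∮ z in C(0, 1), z * (z + z⁻¹) ^ N)
      = Complex.I * ∫ θ in (0:ℝ)..(2*Real.pi),
          Complex.exp (2 * θ * Complex.I) * ((2 * Real.cos θ : ℝ) : ℂ) ^ N := by
  rw [circleIntegral, ← intervalIntegral.integral_const_mul]
  refine intervalIntegral.integral_congr fun θ _ => ?_
  have hcm : circleMap 0 1 θ = Complex.exp (θ * Complex.I) := by simp [circleMap]
  have hinv : (Complex.exp (θ * Complex.I))⁻¹ = Complex.exp (-(θ * Complex.I)) :=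
    (Complex.exp_neg _).symm
  have hcos : Complex.exp (θ * Complex.I) + (Complex.exp (θ * Complex.I))⁻¹
      = ((2 * Real.cos θ : ℝ) : ℂ) := by
    rw [hinv, show -((θ:ℂ) * Complex.I) = -(θ:ℂ) * Complex.I by ring, ← Complex.two_cos]
    push_cast
    rfl

  rw [deriv_circleMap, hcm, smul_eq_mul, hcos]
  rw [show Complex.exp (↑θ * I) * I * (Complex.exp (↑θ * I) * ((2 * Real.cos θ : ℝ) : ℂ) ^ N)
      = I * ((Complex.exp (↑θ * I) * Complex.exp (↑θ * I)) * ((2 * Real.cos θ : ℝ) : ℂ) ^ N) by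
    ring]
  rw [← Complex.exp_add]
  ring_nf

open Complex in
lemma hcosC (θ : ℝ) : ((2 * Real.cos θ : ℝ) : ℂ)
    = Complex.exp (θ * Complex.I) + Complex.exp (-(θ:ℂ) * Complex.I) := by
  rw [← Complex.two_cos]
  push_cast
  rfl

open Complex in
lemma exp_int_integral (c : ℤ) :
    ∫ θ in (0:ℝ)..(2*Real.pi), Complex.exp ((c:ℂ) * θ * Complex.I)
      = if c = 0 then (2*Real.pi : ℂ) else 0 := by
  rcases eq_or_ne c 0 with h | h
  · simp [h]
  · have hc : (c:ℂ) * Complex.I ≠ 0 := by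
      simp [Complex.ext_iff, h]
    have := integral_exp_mul_complex (a := 0) (b := 2*Real.pi) hc
    simp only [if_neg h]
    rw [show (fun θ : ℝ => Complex.exp ((c:ℂ) * θ * Complex.I))
        = fun θ : ℝ => Complex.exp (((c:ℂ) * Complex.I) * θ) by funext θ; ring_nf, this]
    have h2 : Complex.exp ((c:ℂ) * Complex.I * ((2*Real.pi : ℝ) : ℂ)) = 1 := by
      rw [show (c:ℂ) * Complex.I * ((2*Real.pi : ℝ):ℂ) = (c:ℤ) * (2*(Real.pi:ℂ) * Complex.I) by
        push_cast; ring]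
      exact Complex.exp_int_mul_two_pi_mul_I c
    rw [h2]
    simp

open Complex in
lemma T_eval (k : ℕ) (hk : 4 ≤ k) :
    (∫ θ in (0:ℝ)..(2*Real.pi),
        Complex.exp (2 * θ * Complex.I) * ((2 * Real.cos θ : ℝ) : ℂ) ^ (k-2))
      = if Even k then ((k-2).choose (k/2 - 2) : ℂ) * (2*Real.pi) else 0 := by
  have expand : ∀ θ : ℝ, Complex.exp (2 * θ * Complex.I) * ((2 * Real.cos θ : ℝ) : ℂ) ^ (k-2)
      = ∑ j ∈ Finset.range (k-1), ((k-2).choose j : ℂ)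
          * Complex.exp (((2*(j:ℤ) - k + 4 : ℤ) : ℂ) * θ * Complex.I) := by
    intro θ
    rw [hcosC θ, add_pow, show k - 2 + 1 = k - 1 by omega, Finset.mul_sum]
    refine Finset.sum_congr rfl fun j hj => ?_
    have hjle : j ≤ k - 2 := by
      have := Finset.mem_range.mp hj; omega
    rw [← Complex.exp_nat_mul, ← Complex.exp_nat_mul]
    rw [show ((2*(j:ℤ) - k + 4 : ℤ) : ℂ) * θ * Complex.I
        = ((j:ℂ) * ((θ:ℂ) * Complex.I) + ((k-2-j : ℕ):ℂ) * (-(θ:ℂ) * Complex.I)) + 2 * θ * Complex.I by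
      push_cast [Nat.cast_sub hjle, Nat.cast_sub (show 2 ≤ k by omega)]; ring]
    rw [Complex.exp_add, Complex.exp_add]
    ring
  have hInt : ∀ c : ℤ, IntervalIntegrable
      (fun θ : ℝ => Complex.exp ((c:ℂ) * θ * Complex.I)) MeasureTheory.volume 0 (2*Real.pi) := by
    intro c
    apply Continuous.intervalIntegrable
    exact Complex.continuous_exp.comp (by continuity)
  calc (∫ θ in (0:ℝ)..(2*Real.pi),
        Complex.exp (2 * θ * Complex.I) * ((2 * Real.cos θ : ℝ) : ℂ) ^ (k-2))
      = ∫ θ in (0:ℝ)..(2*Real.pi), ∑ j ∈ Finset.range (k-1), ((k-2).choose j : ℂ)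
          * Complex.exp (((2*(j:ℤ) - k + 4 : ℤ) : ℂ) * θ * Complex.I) := by
        exact intervalIntegral.integral_congr fun θ _ => expand θ
    _ = ∑ j ∈ Finset.range (k-1), ((k-2).choose j : ℂ)
          * ∫ θ in (0:ℝ)..(2*Real.pi),
              Complex.exp (((2*(j:ℤ) - k + 4 : ℤ) : ℂ) * θ * Complex.I) := by
        rw [intervalIntegral.integral_finset_sum]
        · exact Finset.sum_congr rfl fun j _ => intervalIntegral.integral_const_mul _ _
        · exact fun j _ => ((hInt _).const_mul _)
    _ = ∑ j ∈ Finset.range (k-1), ((k-2).choose j : ℂ)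
          * (if (2*(j:ℤ) - k + 4 : ℤ) = 0 then (2*Real.pi : ℂ) else 0) := by
        exact Finset.sum_congr rfl fun j _ => by rw [exp_int_integral]
    _ = if Even k then ((k-2).choose (k/2 - 2) : ℂ) * (2*Real.pi) else 0 := by
        rcases Nat.even_or_odd k with he | ho
        · rw [if_pos he]
          obtain ⟨r, hr⟩ := he
          have hj0 : k/2 - 2 ∈ Finset.range (k-1) := by
            refine Finset.mem_range.mpr ?_; omega
          rw [Finset.sum_eq_single (k/2 - 2)]
          · rw [if_pos (by omega)]
          · intro j _ hne
            rw [if_neg (by omega), mul_zero]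
          · intro h; exact absurd hj0 h
        · rw [if_neg (Nat.not_even_iff_odd.mpr ho)]
          refine Finset.sum_eq_zero fun j _ => ?_
          rw [if_neg ?_, mul_zero]
          obtain ⟨r, hr⟩ := ho
          omega

open MeasureTheory Real in
lemma image_cos_Ioo : (fun θ : ℝ => 2 * Real.cos θ) '' Set.Ioo 0 π = Set.Ioo (-2 : ℝ) 2 := by
  ext t
  simp only [Set.mem_image, Set.mem_Ioo]
  constructor
  · rintro ⟨θ, ⟨h0, hπ⟩, rfl⟩
    constructor
    · have := Real.strictAntiOn_cos (Set.mem_Icc.mpr ⟨le_of_lt h0, le_of_lt hπ⟩)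
        (Set.mem_Icc.mpr ⟨le_of_lt (lt_trans h0 hπ), le_refl π⟩) hπ
      rw [Real.cos_pi] at this
      linarith
    · have := Real.strictAntiOn_cos (Set.mem_Icc.mpr ⟨le_refl 0, le_of_lt (lt_trans h0 hπ)⟩)
        (Set.mem_Icc.mpr ⟨le_of_lt h0, le_of_lt hπ⟩) h0
      rw [Real.cos_zero] at this
      linarith
  · rintro ⟨h1, h2⟩
    refine ⟨Real.arccos (t/2), ⟨?_, ?_⟩, ?_⟩
    · exact Real.arccos_pos.mpr (by linarith)
    · rw [Real.arccos]
      have := Real.neg_pi_div_two_lt_arcsin (x := t/2) |>.mpr (by linarith)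
      linarith
    · rw [Real.cos_arccos (by linarith) (by linarith)]; ring

open MeasureTheory Real in
lemma subst_cos (g : ℝ → ℝ) :
    (∫ t in (-2:ℝ)..2, g t / Real.sqrt (4 - t^2))
      = ∫ θ in (0:ℝ)..π, g (2 * Real.cos θ) := by
  have hderiv : ∀ θ ∈ Set.Ioo (0:ℝ) π,
      HasDerivWithinAt (fun θ : ℝ => 2 * Real.cos θ) (-(2 * Real.sin θ)) (Set.Ioo 0 π) θ := by
    intro θ _
    have := (Real.hasDerivAt_cos θ).const_mul (2:ℝ)
    rw [show -(2 * Real.sin θ) = 2 * -Real.sin θ by ring]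
    exact this.hasDerivWithinAt
  have hinj : Set.InjOn (fun θ : ℝ => 2 * Real.cos θ) (Set.Ioo 0 π) := by
    intro a ha b hb h
    simp only [Set.mem_Ioo] at ha hb
    simp only at h
    refine Real.injOn_cos ⟨le_of_lt ha.1, le_of_lt ha.2⟩ ⟨le_of_lt hb.1, le_of_lt hb.2⟩ ?_
    linarith
  have key := integral_image_eq_integral_abs_deriv_smul measurableSet_Ioo hderiv hinj
      (fun t => g t / Real.sqrt (4 - t^2))
  rw [image_cos_Ioo] at key
  rw [intervalIntegral.integral_of_le (by norm_num : (-2:ℝ) ≤ 2),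
    integral_Ioc_eq_integral_Ioo, key,
    intervalIntegral.integral_of_le Real.pi_pos.le, integral_Ioc_eq_integral_Ioo]
  refine setIntegral_congr_fun measurableSet_Ioo fun θ hθ => ?_
  have hs : 0 < Real.sin θ := Real.sin_pos_of_pos_of_lt_pi hθ.1 hθ.2
  have hsq : Real.sqrt (4 - (2 * Real.cos θ)^2) = 2 * Real.sin θ := by
    have h4 : 4 - (2 * Real.cos θ)^2 = (2 * Real.sin θ)^2 := by
      have := Real.sin_sq_add_cos_sq θ
      nlinarith
    rw [h4, Real.sqrt_sq (by linarith)]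
  simp only [smul_eq_mul]
  rw [abs_of_nonpos (by nlinarith), hsq]
  field_simp

open Real in
lemma T_real (k : ℕ) :
    (∫ θ in (0:ℝ)..(2*π), Complex.exp (2 * θ * Complex.I) * ((2 * Real.cos θ : ℝ) : ℂ) ^ (k-2))
      = (((2 * ∫ θ in (0:ℝ)..π, Real.cos (2*θ) * (2 * Real.cos θ)^(k-2) : ℝ)) : ℂ) := by
  set f : ℝ → ℝ := fun θ => Real.cos (2*θ) * (2 * Real.cos θ)^(k-2) with hf
  set s : ℝ → ℝ := fun θ => Real.sin (2*θ) * (2 * Real.cos θ)^(k-2) with hs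
  have hfc : Continuous f := by fun_prop
  have hsc : Continuous s := by fun_prop
  have hsin4 : Real.sin (4*π) = 0 := by
    rw [show (4:ℝ)*π = 2*π + 2*π by ring, Real.sin_add_two_pi, Real.sin_two_pi]
  have hcos4 : Real.cos (4*π) = 1 := by
    rw [show (4:ℝ)*π = 2*π + 2*π by ring, Real.cos_add_two_pi, Real.cos_two_pi]
  have hrefl_f : ∀ x : ℝ, f (2*π - x) = f x := by
    intro x
    simp only [hf]
    rw [show 2*(2*π - x) = 4*π - 2*x by ring, Real.cos_sub, hsin4, hcos4,
      Real.cos_sub, Real.cos_two_pi, Real.sin_two_pi]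
    ring_nf
  have hrefl_s : ∀ x : ℝ, s (2*π - x) = -s x := by
    intro x
    simp only [hs]
    rw [show 2*(2*π - x) = 4*π - 2*x by ring, Real.sin_sub, hsin4, hcos4,
      Real.cos_sub, Real.cos_two_pi, Real.sin_two_pi]
    ring_nf
  -- integral of s over [0, 2π] is zero
  have hs0 : (∫ θ in (0:ℝ)..(2*π), s θ) = 0 := by
    have h1 : (∫ x in (0:ℝ)..(2*π), s (2*π - x)) = ∫ x in (2*π - 2*π)..(2*π - 0), s x :=
      intervalIntegral.integral_comp_sub_left s (2*π)
    simp only [sub_self, sub_zero] at h1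
    have h2 : (∫ x in (0:ℝ)..(2*π), s (2*π - x)) = ∫ x in (0:ℝ)..(2*π), -s x := by
      exact intervalIntegral.integral_congr fun x _ => hrefl_s x
    rw [h2, intervalIntegral.integral_neg] at h1
    linarith
  -- integral of f over [0, 2π] is twice that over [0, π]
  have hf2 : (∫ θ in (0:ℝ)..(2*π), f θ) = 2 * ∫ θ in (0:ℝ)..π, f θ := by
    have hadd := intervalIntegral.integral_add_adjacent_intervals
      (hfc.intervalIntegrable (a := (0:ℝ)) (b := π) (μ := MeasureTheory.volume)) (hfc.intervalIntegrable (a := π) (b := 2*π) (μ := MeasureTheory.volume))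
    have h1 : (∫ x in (0:ℝ)..π, f (2*π - x)) = ∫ x in (2*π - π)..(2*π - 0), f x :=
      intervalIntegral.integral_comp_sub_left f (2*π)
    have h2 : (∫ x in (0:ℝ)..π, f (2*π - x)) = ∫ x in (0:ℝ)..π, f x :=
      intervalIntegral.integral_congr fun x _ => hrefl_f x
    rw [h2] at h1
    rw [show 2*π - π = π by ring, sub_zero] at h1
    rw [← hadd, ← h1]
    ring
  -- expand the complex integrand
  have hpt : ∀ θ : ℝ, Complex.exp (2 * θ * Complex.I) * ((2 * Real.cos θ : ℝ) : ℂ) ^ (k-2)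
      = ((f θ : ℝ) : ℂ) + ((s θ : ℝ) : ℂ) * Complex.I := by
    intro θ
    rw [show (2 : ℂ) * θ * Complex.I = ((2*θ : ℝ) : ℂ) * Complex.I by push_cast; ring,
      Complex.exp_mul_I]
    simp only [hf, hs]
    rw [← Complex.ofReal_cos, ← Complex.ofReal_sin]
    push_cast
    ring
  rw [intervalIntegral.integral_congr fun θ _ => hpt θ]
  rw [intervalIntegral.integral_add]
  · rw [intervalIntegral.integral_mul_const, intervalIntegral.integral_ofReal,
      intervalIntegral.integral_ofReal, hs0, hf2]
    push_cast
    ring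
  · exact ((Complex.continuous_ofReal.comp hfc).intervalIntegrable _ _)
  · exact ((((Complex.continuous_ofReal.comp hsc).mul continuous_const)).intervalIntegrable _ _)

/-- Second-order correction for GUE: the explicit derivative sum equals the contour
integral `(k(k-1)/(24πi)) ∮_{|z|=1} z (z+1/z)^{k-2} dz`, which equals
`(1/(24π)) ∫_{-2}^2 (t^k)'' (t²-2)/√(4-t²) dt`. -/
theorem stmt17 (k : ℕ) (hk : 4 ≤ k) :
    (((1 / 12 : ℝ) * ∑ m ∈ Finset.range (k - 3),
        ((Nat.factorial k : ℝ) /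
            ((Nat.factorial m : ℝ) * (Nat.factorial (m + 2) : ℝ) *
              (Nat.factorial (k - m - 4) : ℝ))) *
          iteratedDeriv m (fun x : ℝ => x ^ (k - m - 4)) 0 : ℝ) : ℂ)
      = (((k : ℂ) * ((k : ℂ) - 1)) / (24 * (Real.pi : ℂ) * Complex.I)) *
          (∮ z in C(0, 1), z * (z + z⁻¹) ^ (k - 2))
    ∧ (((k : ℂ) * ((k : ℂ) - 1)) / (24 * (Real.pi : ℂ) * Complex.I)) *
          (∮ z in C(0, 1), z * (z + z⁻¹) ^ (k - 2))
        = (((1 / (24 * Real.pi)) *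
            ∫ t in (-2 : ℝ)..2,
              (deriv (deriv (fun t : ℝ => t ^ k)) t) * (t ^ 2 - 2) / Real.sqrt (4 - t ^ 2)
            : ℝ) : ℂ) := by
  have hπ : (Real.pi : ℂ) ≠ 0 := Complex.ofReal_ne_zero.mpr Real.pi_ne_zero
  constructor
  · rw [contour_param, T_eval k hk, sum_eval k hk]
    rcases Nat.even_or_odd k with he | ho
    · rw [if_pos he, if_pos he]
      obtain ⟨r, hr⟩ := he
      have hchoose := Nat.choose_mul_factorial_mul_factorial
        (show k/2 - 2 ≤ k - 2 by omega)
      rw [show k - 2 - (k/2 - 2) = k/2 by omega] at hchoose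
      have hkfac : k.factorial = k * ((k-1) * (k-2).factorial) := by
        rw [show k = (k-2)+1+1 by omega]
        rw [Nat.factorial_succ, Nat.factorial_succ]
        have e1 : k - 2 + 1 + 1 - 1 = k - 1 := by omega
        have e2 : k - 2 + 1 + 1 - 2 = k - 2 := by omega
        rw [e1, e2, show k - 2 + 1 = k - 1 by omega]
      have hk1 : ((k:ℂ) - 1) = ((k - 1 : ℕ) : ℂ) := by
        push_cast [Nat.cast_sub (show 1 ≤ k by omega)]; ring
      rw [hk1]
      have h1 : ((k/2 - 2).factorial : ℂ) ≠ 0 := Nat.cast_ne_zero.mpr (Nat.factorial_ne_zero _)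
      have h2 : ((k/2).factorial : ℂ) ≠ 0 := Nat.cast_ne_zero.mpr (Nat.factorial_ne_zero _)
      push_cast
      field_simp [Complex.I_ne_zero]
      have H2 : k * (k-1) * ((k-2).choose (k/2-2)) * (k/2-2).factorial * (k/2).factorial
          = k.factorial := by
        calc k * (k-1) * ((k-2).choose (k/2-2)) * (k/2-2).factorial * (k/2).factorial
            = k * ((k-1) * ((k-2).choose (k/2-2) * (k/2-2).factorial * (k/2).factorial)) := by
              ring
          _ = k * ((k-1) * (k-2).factorial) := by rw [hchoose]
          _ = k.factorial := hkfac.symm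
      have H2C : ((k*(k-1):ℕ) : ℂ) * (((k-2).choose (k/2-2) : ℕ) : ℂ)
            * (((k/2-2).factorial : ℕ):ℂ) * (((k/2).factorial : ℕ):ℂ) = (k.factorial : ℂ) := by
        exact_mod_cast congrArg (fun n : ℕ => (n:ℂ)) H2
      push_cast at H2C
      linear_combination (-24) * H2C
    · rw [if_neg (Nat.not_even_iff_odd.mpr ho), if_neg (Nat.not_even_iff_odd.mpr ho)]
      simp
  · rw [contour_param, T_real k]
    have hD : ∀ t : ℝ, deriv (deriv (fun t : ℝ => t ^ k)) t
        = ((k * (k-1) : ℕ) : ℝ) * t ^ (k - 2) := by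
      intro t
      have d1 : (deriv fun t : ℝ => t ^ k) = fun t : ℝ => (k : ℝ) * t ^ (k - 1) :=
        funext fun t => by simp [deriv_pow]
      rw [d1]
      have h1 : HasDerivAt (fun t : ℝ => (k:ℝ) * t ^ (k-1))
          ((k:ℝ) * (((k-1 : ℕ):ℝ) * t ^ (k - 1 - 1))) t :=
        (hasDerivAt_pow (k-1) t).const_mul _
      rw [h1.deriv, show k - 1 - 1 = k - 2 by omega]
      push_cast
      ring
    have hcong : (∫ t in (-2:ℝ)..2,
          (deriv (deriv (fun t : ℝ => t ^ k)) t) * (t ^ 2 - 2) / Real.sqrt (4 - t ^ 2))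
        = ∫ t in (-2:ℝ)..2,
            (fun t => ((k * (k-1) : ℕ) : ℝ) * t ^ (k - 2) * (t ^ 2 - 2)) t
              / Real.sqrt (4 - t ^ 2) := by
      refine intervalIntegral.integral_congr fun t _ => ?_
      rw [hD t]
    rw [hcong, subst_cos]
    have hcong2 : (∫ θ in (0:ℝ)..Real.pi,
          (fun t => ((k * (k-1) : ℕ) : ℝ) * t ^ (k - 2) * (t ^ 2 - 2)) (2 * Real.cos θ))
        = ∫ θ in (0:ℝ)..Real.pi,
            (2 * ((k * (k-1) : ℕ) : ℝ)) * (Real.cos (2*θ) * (2 * Real.cos θ) ^ (k-2)) := by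
      refine intervalIntegral.integral_congr fun θ _ => ?_
      simp only
      rw [Real.cos_two_mul]
      ring
    rw [hcong2, intervalIntegral.integral_const_mul]
    push_cast [Nat.cast_sub (show 1 ≤ k by omega)]
    field_simp [Complex.I_ne_zero]
end

section
/- Define B(u) := log((e^u - 1)/u), extended by B(0) = 0, which is analytic in a neighborhood of 0. Then B'(0) = 1/2, and for every smooth function A and integers k > m ≥ 1, Σ_{n=1}^{m} (-1)^{n+1} · binom(m,n) · d^{m-n}/du^{m-n} (B^{(n+1)}(u)·(A'(u)+B'(u))^{k-m-1})|_{u=0} = d^m/du^m ((B'(u) - 1/2)·(A'(u)+B'(u))^{k-m-1})|_{u=0}. -/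
open Filter Topology
open scoped ContDiff

/-- `B(u) = log((e^u - 1)/u)`, extended by `B(0) = 0`. -/
noncomputable def Bfun : ℝ → ℝ :=
  fun u => if u = 0 then 0 else Real.log ((Real.exp u - 1) / u)

noncomputable def gfun : ℝ → ℝ := fun u => if u = 0 then 1 else (Real.exp u - 1) / u

lemma gfun_pos (x : ℝ) : 0 < gfun x := by
  unfold gfun
  rcases lt_trichotomy x 0 with h | h | h
  · rw [if_neg h.ne]
    apply div_pos_of_neg_of_neg _ h
    have := Real.exp_lt_exp.mpr h
    rw [Real.exp_zero] at this
    linarith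
  · simp [h]
  · rw [if_neg h.ne']
    apply div_pos _ h
    have := Real.exp_lt_exp.mpr h
    rw [Real.exp_zero] at this
    linarith

lemma analyticAt_rlog {x : ℝ} (hx : 0 < x) : AnalyticAt ℝ Real.log x := by
  have hlogeq : Real.log = fun y : ℝ => (Complex.log (Complex.ofRealCLM y)).re := by
    funext y
    simp [Complex.log_ofReal_re]
  rw [hlogeq]
  have h1 : AnalyticAt ℝ Complex.log ((Complex.ofRealCLM : ℝ →L[ℝ] ℂ) x) :=
    (analyticAt_clog (Complex.ofReal_mem_slitPlane.mpr hx)).restrictScalars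
  exact (Complex.reCLM.analyticAt _).comp (h1.comp (Complex.ofRealCLM.analyticAt x))

lemma analyticAt_gfun_ne {x : ℝ} (hx : x ≠ 0) : AnalyticAt ℝ gfun x := by
  have h : AnalyticAt ℝ (fun u => (Real.exp u - 1) / u) x :=
    ((analyticAt_rexp).sub analyticAt_const).div analyticAt_id hx
  apply h.congr
  filter_upwards [isOpen_ne.mem_nhds hx] with y hy
  simp [gfun, hy]

/-- The factorization `exp u - 1 = u * g u` near `0` with `g` analytic, `g 0 = 1`,
`g' 0 = 1/2`, and `gfun =ᶠ g` near `0`. -/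
lemma gfun_factor : AnalyticAt ℝ gfun 0 ∧ deriv gfun 0 = 1 / 2 := by
  set f : ℝ → ℝ := fun u => Real.exp u - 1 with hfdef
  have hfa : AnalyticAt ℝ f 0 := analyticAt_rexp.sub analyticAt_const
  have hne : ¬ ∀ᶠ z in 𝓝 (0 : ℝ), f z = 0 := by
    intro h
    obtain ⟨ε, hε, hball⟩ := Metric.eventually_nhds_iff.mp h
    have h2 : (0 : ℝ) < ε / 2 := by linarith
    have hy := hball (y := ε / 2)
      (by rw [Real.dist_eq, sub_zero, abs_of_pos h2]; linarith)
    have h3 : Real.exp (ε / 2) = 1 := by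
      have : Real.exp (ε / 2) - 1 = 0 := hy
      linarith
    have h4 := Real.exp_lt_exp.mpr h2
    rw [Real.exp_zero, h3] at h4
    exact lt_irrefl _ h4
  obtain ⟨n, g, hga, hg0, heq⟩ := hfa.exists_eventuallyEq_pow_smul_nonzero_iff.mpr hne
  simp only [sub_zero, smul_eq_mul] at heq
  -- the slope of f at 0 tends to 1
  have hslope : Tendsto (fun z : ℝ => f z / z) (𝓝[≠] (0:ℝ)) (𝓝 1) := by
    have hd : HasDerivAt f 1 0 := by
      have := (Real.hasDerivAt_exp 0).sub_const 1
      rw [Real.exp_zero] at this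
      exact this
    have := hasDerivAt_iff_tendsto_slope.mp hd
    refine this.congr' ?_
    filter_upwards [self_mem_nhdsWithin] with z hz
    simp [slope, hfdef, Real.exp_zero, div_eq_inv_mul]
  -- on punctured nbhd, f z / z = z^(n-1) * g z
  have hgc : ContinuousAt g 0 := hga.continuousAt
  have hn1 : n = 1 := by
    rcases n with _ | _ | n
    · -- n = 0 : then g 0 = f 0 = 0, contradiction
      exfalso
      apply hg0
      have h1 := heq.self_of_nhds
      simp only [hfdef, pow_zero, one_mul, Real.exp_zero, sub_self] at h1
      exact h1.symm
    · rfl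
    · -- n ≥ 2 : slope tends to 0 ≠ 1
      exfalso
      have h2 : Tendsto (fun z : ℝ => f z / z) (𝓝[≠] (0:ℝ)) (𝓝 0) := by
        have hcont : Tendsto (fun z : ℝ => z ^ (n + 1) * g z) (𝓝[≠] (0:ℝ)) (𝓝 0) := by
          have : Tendsto (fun z : ℝ => z ^ (n + 1) * g z) (𝓝 (0:ℝ)) (𝓝 (0 ^ (n+1) * g 0)) :=
            (continuousAt_id.pow _).mul hgc
          simpa using this.mono_left nhdsWithin_le_nhds
        refine hcont.congr' ?_
        filter_upwards [heq.filter_mono nhdsWithin_le_nhds, self_mem_nhdsWithin] with z hz hz0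
        have hz0' : z ≠ 0 := hz0
        rw [hz]
        field_simp
        ring
      exact one_ne_zero (tendsto_nhds_unique hslope h2)
  subst hn1
  simp only [pow_one] at heq
  -- g 0 = 1
  have hg1 : g 0 = 1 := by
    have h2 : Tendsto (fun z : ℝ => f z / z) (𝓝[≠] (0:ℝ)) (𝓝 (g 0)) := by
      have hcont : Tendsto g (𝓝 (0:ℝ)) (𝓝 (g 0)) := hgc
      refine (hcont.mono_left nhdsWithin_le_nhds).congr' ?_
      filter_upwards [heq.filter_mono nhdsWithin_le_nhds, self_mem_nhdsWithin] with z hz hz0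
      have hz0' : z ≠ 0 := hz0
      rw [hz]; field_simp
    exact (tendsto_nhds_unique h2 hslope)
  -- gfun =ᶠ g near 0
  have hgfun_eq : gfun =ᶠ[𝓝 (0:ℝ)] g := by
    filter_upwards [heq] with z hz
    by_cases h0 : z = 0
    · simp [gfun, h0, hg1]
    · simp only [gfun, if_neg h0]
      have hz' : Real.exp z - 1 = z * g z := hz
      rw [hz']
      field_simp
  constructor
  · exact hga.congr hgfun_eq.symm
  · -- deriv gfun 0 = 1/2
    have hderiv_eq : deriv gfun 0 = deriv g 0 := hgfun_eq.deriv.self_of_nhds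
    rw [hderiv_eq]
    -- compute deriv g 0 = 1/2 via second derivative of f
    have hgd : ∀ᶠ z in 𝓝 (0:ℝ), AnalyticAt ℝ g z := hga.eventually_analyticAt
    have hstep : deriv f =ᶠ[𝓝 (0:ℝ)] fun z => g z + z * deriv g z := by
      have heq' : f =ᶠ[𝓝 (0:ℝ)] fun z => z * g z := heq
      have h1 : deriv f =ᶠ[𝓝 (0:ℝ)] deriv (fun z => z * g z) := heq'.deriv
      refine h1.trans ?_
      filter_upwards [hgd] with z hz
      rw [deriv_fun_mul differentiableAt_fun_id hz.differentiableAt]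
      simp [mul_comm]
    have hdg : AnalyticAt ℝ (deriv g) 0 := by
      have h1 : AnalyticAt ℝ (fun y => (fderiv ℝ g y : ℝ → ℝ) 1) 0 :=
        ((ContinuousLinearMap.apply ℝ ℝ (1:ℝ)).analyticAt _).comp hga.fderiv
      exact h1.congr (by filter_upwards with y using fderiv_apply_one_eq_deriv)
    have hL : deriv (deriv f) 0 = deriv (fun z => g z + z * deriv g z) 0 := hstep.deriv.self_of_nhds
    have hexp : deriv (deriv f) 0 = 1 := by
      have h1 : deriv f = Real.exp := by
        funext z
        have h2 : HasDerivAt f (Real.exp z) z := (Real.hasDerivAt_exp z).sub_const 1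
        exact h2.deriv
      rw [h1, Real.deriv_exp, Real.exp_zero]
    have hR : deriv (fun z => g z + z * deriv g z) 0 = 2 * deriv g 0 := by
      rw [deriv_fun_add hga.differentiableAt (differentiableAt_fun_id.fun_mul hdg.differentiableAt),
          deriv_fun_mul differentiableAt_fun_id hdg.differentiableAt]
      simp
      ring
    rw [hL, hR] at hexp
    linarith

lemma analyticAt_gfun (x : ℝ) : AnalyticAt ℝ gfun x := by
  by_cases hx : x = 0
  · subst hx; exact gfun_factor.1
  · exact analyticAt_gfun_ne hx

lemma Bfun_eq : Bfun = fun u => Real.log (gfun u) := by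
  funext u
  unfold Bfun gfun
  split_ifs with h
  · simp
  · rfl

lemma analyticAt_Bfun (x : ℝ) : AnalyticAt ℝ Bfun x := by
  rw [Bfun_eq]
  exact (analyticAt_rlog (gfun_pos x)).comp (analyticAt_gfun x)

lemma contDiff_Bfun : ContDiff ℝ ∞ Bfun :=
  AnalyticOnNhd.contDiff (fun x _ => analyticAt_Bfun x)

lemma deriv_Bfun_zero : deriv Bfun 0 = 1 / 2 := by
  rw [Bfun_eq]
  have hgd : HasDerivAt gfun (1/2) 0 := by
    have := (analyticAt_gfun 0).differentiableAt.hasDerivAt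
    rwa [gfun_factor.2] at this
  have h0 : gfun 0 = 1 := by simp [gfun]
  have hlog : HasDerivAt Real.log (gfun 0)⁻¹ (gfun 0) :=
    Real.hasDerivAt_log (gfun_pos 0).ne'
  have hcomp := (hlog.comp 0 hgd).deriv
  simp only [Function.comp_def] at hcomp
  rw [hcomp, h0]
  norm_num

lemma one_le_inf : (1 : WithTop ℕ∞) ≤ ∞ := by exact_mod_cast le_top

lemma contDiff_iteratedDeriv {F : ℝ → ℝ} (h : ContDiff ℝ ∞ F) (n : ℕ) :
    ContDiff ℝ ∞ (iteratedDeriv n F) := by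
  rw [iteratedDeriv_eq_iterate]
  exact h.iterate_deriv n

/-- key operator identity: `∑_{n=0}^m (-1)^n C(m,n) D^{m-n}(f^{(n)} g) = f ⬝ g^{(m)}`. -/
lemma keyS (g : ℝ → ℝ) (hg : ContDiff ℝ ∞ g) :
    ∀ (m : ℕ) (f : ℝ → ℝ), ContDiff ℝ ∞ f → ∀ x : ℝ,
    ∑ n ∈ Finset.range (m + 1), (-1 : ℝ) ^ n * (m.choose n : ℝ) *
      iteratedDeriv (m - n) (fun u => iteratedDeriv n f u * g u) x
    = f x * iteratedDeriv m g x := by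
  intro m
  induction m with
  | zero =>
    intro f hf x
    simp [iteratedDeriv_zero]
  | succ m ih =>
    intro f hf x
    have hf' : ContDiff ℝ ∞ (deriv f) := (contDiff_infty_iff_deriv.mp hf).2
    have hT : ∀ n : ℕ, ContDiff ℝ ∞ (fun u => iteratedDeriv n f u * g u) :=
      fun n => (contDiff_iteratedDeriv hf n).mul hg
    -- step A : derivative of the m-sum
    have hA : ∑ n ∈ Finset.range (m + 1), (-1 : ℝ) ^ n * (m.choose n : ℝ) *
          iteratedDeriv (m - n + 1) (fun u => iteratedDeriv n f u * g u) x
        = deriv f x * iteratedDeriv m g x + f x * iteratedDeriv (m + 1) g x := by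
      have hfun : (fun y => ∑ n ∈ Finset.range (m + 1), (-1 : ℝ) ^ n * (m.choose n : ℝ) *
            iteratedDeriv (m - n) (fun u => iteratedDeriv n f u * g u) y)
          = fun y => f y * iteratedDeriv m g y := funext (ih f hf)
      have h1 : deriv (fun y => ∑ n ∈ Finset.range (m + 1), (-1 : ℝ) ^ n * (m.choose n : ℝ) *
            iteratedDeriv (m - n) (fun u => iteratedDeriv n f u * g u) y) x
          = ∑ n ∈ Finset.range (m + 1), (-1 : ℝ) ^ n * (m.choose n : ℝ) *
            iteratedDeriv (m - n + 1) (fun u => iteratedDeriv n f u * g u) x := by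
        rw [deriv_fun_sum (fun n _ => ((contDiff_iteratedDeriv (hT n) (m - n)).differentiable
          (by simp) x).const_mul _)]
        refine Finset.sum_congr rfl fun n _ => ?_
        rw [deriv_const_mul _ ((contDiff_iteratedDeriv (hT n) (m - n)).differentiable (by simp) x),
          ← iteratedDeriv_succ]
      have h2 : deriv (fun y => f y * iteratedDeriv m g y) x
          = deriv f x * iteratedDeriv m g x + f x * iteratedDeriv (m + 1) g x := by
        rw [deriv_fun_mul (hf.differentiable (by simp) x)
          ((contDiff_iteratedDeriv hg m).differentiable (by simp) x), iteratedDeriv_succ]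
      rw [← h1, hfun, h2]
    -- step B : the IH for deriv f
    have hB : ∑ n ∈ Finset.range (m + 1), (-1 : ℝ) ^ n * (m.choose n : ℝ) *
          iteratedDeriv (m - n) (fun u => iteratedDeriv (n + 1) f u * g u) x
        = deriv f x * iteratedDeriv m g x := by
      have := ih (deriv f) hf' x
      simp only [← iteratedDeriv_succ'] at this
      exact this
    -- now manipulate the goal sum
    rw [Finset.sum_range_succ']
    -- n = 0 term and shifted sum
    have hsplit : ∀ n ∈ Finset.range (m + 1),
        (-1 : ℝ) ^ (n + 1) * ((m + 1).choose (n + 1) : ℝ) *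
          iteratedDeriv (m + 1 - (n + 1)) (fun u => iteratedDeriv (n + 1) f u * g u) x
        = -((-1 : ℝ) ^ n * (m.choose n : ℝ) *
              iteratedDeriv (m - n) (fun u => iteratedDeriv (n + 1) f u * g u) x)
          + -((-1 : ℝ) ^ n * (m.choose (n + 1) : ℝ) *
              iteratedDeriv (m - n) (fun u => iteratedDeriv (n + 1) f u * g u) x) := by
      intro n hn
      have : m + 1 - (n + 1) = m - n := by omega
      rw [this, Nat.choose_succ_succ]
      push_cast
      ring
    rw [Finset.sum_congr rfl hsplit, Finset.sum_add_distrib, Finset.sum_neg_distrib,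
      Finset.sum_neg_distrib, hB]
    -- remaining : D^{m+1}(f g) - Σ (-1)^n C(m,n+1) D^{m-n}(T(n+1)) relates to hA
    have hC : ∑ n ∈ Finset.range (m + 1), (-1 : ℝ) ^ n * (m.choose (n + 1) : ℝ) *
          iteratedDeriv (m - n) (fun u => iteratedDeriv (n + 1) f u * g u) x
        = iteratedDeriv (m + 1) (fun u => iteratedDeriv 0 f u * g u) x
          - ∑ n ∈ Finset.range (m + 1), (-1 : ℝ) ^ n * (m.choose n : ℝ) *
            iteratedDeriv (m - n + 1) (fun u => iteratedDeriv n f u * g u) x := by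
      rw [Finset.sum_range_succ' (fun n => (-1 : ℝ) ^ n * (m.choose n : ℝ) *
        iteratedDeriv (m - n + 1) (fun u => iteratedDeriv n f u * g u) x) m]
      rw [Finset.sum_range_succ (fun n => (-1 : ℝ) ^ n * (m.choose (n + 1) : ℝ) *
        iteratedDeriv (m - n) (fun u => iteratedDeriv (n + 1) f u * g u) x) m]
      simp only [Nat.choose_succ_self, Nat.cast_zero, mul_zero, zero_mul, add_zero,
        Nat.choose_zero_right, Nat.cast_one, pow_zero, one_mul, Nat.sub_zero, Nat.sub_self]
      have hinner : ∀ n ∈ Finset.range m,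
          (-1 : ℝ) ^ (n + 1) * (m.choose (n + 1) : ℝ) *
            iteratedDeriv (m - (n + 1) + 1) (fun u => iteratedDeriv (n + 1) f u * g u) x
          = -((-1 : ℝ) ^ n * (m.choose (n + 1) : ℝ) *
            iteratedDeriv (m - n) (fun u => iteratedDeriv (n + 1) f u * g u) x) := by
        intro n hn
        have h3 : m - (n + 1) + 1 = m - n := by
          have := Finset.mem_range.mp hn; omega
        rw [h3]; ring
      rw [Finset.sum_congr rfl hinner, Finset.sum_neg_distrib]
      ring
    rw [hC, hA]
    -- finish : goal is now linear algebra
    simp only [Nat.sub_zero, pow_zero, one_mul, Nat.choose_zero_right, Nat.cast_one]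
    ring

/-- `B` is analytic near `0`, `B'(0) = 1/2`, and the alternating binomial sum of
cross-derivatives equals the single-variable derivative of `(B' - 1/2)(A' + B')^{k-m-1}`. -/
theorem stmt19 :
    AnalyticAt ℝ Bfun 0 ∧ deriv Bfun 0 = 1 / 2 ∧
    ∀ (A : ℝ → ℝ), ContDiff ℝ (⊤ : ℕ∞) A → ∀ (k m : ℕ), 1 ≤ m → m < k →
      ∑ n ∈ Finset.Icc 1 m,
          ((-1 : ℝ)) ^ (n + 1) * (Nat.choose m n : ℝ) *
            iteratedDeriv (m - n)
              (fun u => iteratedDeriv (n + 1) Bfun u *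
                (deriv A u + deriv Bfun u) ^ (k - m - 1)) 0
        = iteratedDeriv m
            (fun u => (deriv Bfun u - 1 / 2) * (deriv A u + deriv Bfun u) ^ (k - m - 1)) 0 := by
  refine ⟨analyticAt_Bfun 0, deriv_Bfun_zero, ?_⟩
  intro A hA k m hm hmk
  have hA' : ContDiff ℝ ∞ A := hA.of_le (by simp)
  have hdA : ContDiff ℝ ∞ (deriv A) := (contDiff_infty_iff_deriv.mp hA').2
  have hdB : ContDiff ℝ ∞ (deriv Bfun) := (contDiff_infty_iff_deriv.mp contDiff_Bfun).2
  set g : ℝ → ℝ := fun u => (deriv A u + deriv Bfun u) ^ (k - m - 1) with hgdef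
  have hg : ContDiff ℝ ∞ g := (hdA.add hdB).pow _
  set f : ℝ → ℝ := fun u => deriv Bfun u - 1 / 2 with hfdef
  have hf : ContDiff ℝ ∞ f := hdB.sub contDiff_const
  have hkey := keyS g hg m f hf 0
  have hf0 : f 0 = 0 := by simp [hfdef, deriv_Bfun_zero]
  rw [hf0, zero_mul] at hkey
  -- split off n = 0
  have hrange : Finset.range (m + 1) = insert 0 (Finset.Icc 1 m) := by
    ext x
    simp only [Finset.mem_range, Finset.mem_insert, Finset.mem_Icc]
    omega
  rw [hrange, Finset.sum_insert (by simp)] at hkey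
  simp only [pow_zero, one_mul, Nat.choose_zero_right, Nat.cast_one, Nat.sub_zero,
    iteratedDeriv_zero] at hkey
  -- identify f^{(n)} with B^{(n+1)} for n ≥ 1
  have hfn : ∀ n ∈ Finset.Icc 1 m,
      (-1 : ℝ) ^ n * (m.choose n : ℝ) *
        iteratedDeriv (m - n) (fun u => iteratedDeriv n f u * g u) 0
      = -((-1 : ℝ) ^ (n + 1) * (m.choose n : ℝ) *
        iteratedDeriv (m - n) (fun u => iteratedDeriv (n + 1) Bfun u * g u) 0) := by
    intro n hn
    have hn' := Finset.mem_Icc.mp hn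
    obtain ⟨j, rfl⟩ : ∃ j, n = j + 1 := ⟨n - 1, by omega⟩
    have hiter : iteratedDeriv (j + 1) f = iteratedDeriv (j + 2) Bfun := by
      have hdf : deriv f = deriv (deriv Bfun) := by
        funext u
        exact deriv_sub_const _
      rw [iteratedDeriv_succ', hdf]
      rw [show j + 2 = (j + 1) + 1 from rfl, iteratedDeriv_succ', iteratedDeriv_succ']
    rw [hiter]
    ring_nf
  rw [Finset.sum_congr rfl hfn, Finset.sum_neg_distrib] at hkey
  have hgoal : ∑ n ∈ Finset.Icc 1 m,
      (-1 : ℝ) ^ (n + 1) * (m.choose n : ℝ) *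
        iteratedDeriv (m - n) (fun u => iteratedDeriv (n + 1) Bfun u * g u) 0
      = iteratedDeriv m (fun u => f u * g u) 0 := by linarith
  simp only [hfdef, hgdef] at hgoal
  exact hgoal
end
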